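/- arXiv:0906.0440 — 8 statements merged into one kernel-verified Lean document; each statement's English description precedes it below -/
import Mathlib

section
/- Every irredundant r×s matrix M of non-negative integers satisfies a depth (2r−1) inequality, i.e. there is a positive integer q such that M^{2r} ≤ q·M^{2r−2} entrywise, where M^{2k} = (MM^t)^k. -/
/-!
Put `S = M Mᵀ`. A nonzero row of `M` makes the diagonal of `S` positive, so the powers of `S`
grow entrywise and their zero patterns shrink: a zero entry of `S ^ (r - 1)` is zero in every
`S ^ k` with `k < r`. By Cayley–Hamilton `S ^ r` is an integer combination of these powers, so the
entry vanishes in `S ^ r` as well. Hence the support of `S ^ r` lies in that of `S ^ (r - 1)`, and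
any `q` exceeding all entries of `S ^ r` works.
-/

open Matrix

/-- An irredundant matrix: a matrix of natural numbers in which
every row and every column is nonzero. -/
def Irredundant {I J : Type*} (M : Matrix I J ℕ) : Prop :=
  (∀ i, ∃ j, M i j ≠ 0) ∧ (∀ j, ∃ i, M i j ≠ 0)

/-- The even powers `M^{2k} = (M Mᵀ)^k` of a rectangular matrix. -/
def evenPow {I J : Type*} [Fintype I] [Fintype J] [DecidableEq I]
    (M : Matrix I J ℕ) (k : ℕ) : Matrix I I ℕ :=
  (M * Mᵀ) ^ k

/-- The odd powers `M^{2k+1} = (M Mᵀ)^k M` of a rectangular matrix. -/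
def oddPow {I J : Type*} [Fintype I] [Fintype J] [DecidableEq I]
    (M : Matrix I J ℕ) (k : ℕ) : Matrix I J ℕ :=
  (M * Mᵀ) ^ k * M

/-- The depth `n` inequality `M^{n+1} ≤ q • M^{n-1}` (entrywise), for `n ≥ 2`;
if `n = 2k+1` is odd both sides are even powers, if `n = 2k+2` is even both
sides are odd powers. -/
def DepthIneq {I J : Type*} [Fintype I] [Fintype J] [DecidableEq I]
    (M : Matrix I J ℕ) (n q : ℕ) : Prop :=
  (∀ k, n = 2 * k + 1 → ∀ i i', evenPow M (k + 1) i i' ≤ q * evenPow M k i i') ∧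
  (∀ k, n = 2 * k + 2 → ∀ i j, oddPow M (k + 1) i j ≤ q * oddPow M k i j)

namespace Matrix

theorem one_le_mul_transpose_apply_self {n m : Type*} [Fintype m] (M : Matrix n m ℕ) {i : n}
    (hi : ∃ j, M i j ≠ 0) : 1 ≤ (M * Mᵀ) i i := by
  obtain ⟨j, hj⟩ := hi
  calc 1 ≤ M i j * M i j := Nat.one_le_iff_ne_zero.mpr (mul_ne_zero hj hj)
    _ ≤ ∑ j', M i j' * M i j' :=
        Finset.single_le_sum_of_canonicallyOrdered (f := fun j' => M i j' * M i j')
          (Finset.mem_univ j)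
    _ = (M * Mᵀ) i i := by simp only [mul_apply, transpose_apply]

variable {n : Type*} [Fintype n] [DecidableEq n]

theorem monotone_pow_apply_of_one_le_diag {R : Type*} [Semiring R] [PartialOrder R]
    [CanonicallyOrderedAdd R] (A : Matrix n n R) (hA : ∀ i, 1 ≤ A i i) (i j : n) :
    Monotone fun k => (A ^ k) i j := by
  refine monotone_nat_of_le_succ fun k => ?_
  calc (A ^ k) i j = (A ^ k) i j * 1 := (mul_one _).symm
    _ ≤ (A ^ k) i j * A j j := mul_le_mul_right (hA j) _
    _ ≤ ∑ m, (A ^ k) i m * A m j :=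
        Finset.single_le_sum_of_canonicallyOrdered (f := fun m => (A ^ k) i m * A m j)
          (Finset.mem_univ j)
    _ = (A ^ (k + 1)) i j := by rw [pow_succ, mul_apply]

theorem pow_card_apply_eq_zero {R : Type*} [CommRing R] [Nontrivial R] (A : Matrix n n R)
    {i j : n} (h : ∀ k < Fintype.card n, (A ^ k) i j = 0) : (A ^ Fintype.card n) i j = 0 := by
  have hdeg : A.charpoly.natDegree = Fintype.card n := charpoly_natDegree_eq_dim A
  have hlead : A.charpoly.coeff (Fintype.card n) = 1 := by
    rw [← hdeg]; exact (charpoly_monic A).leadingCoeff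
  have hCH := congrFun (congrFun (aeval_self_charpoly A) i) j
  rw [Polynomial.aeval_eq_sum_range, hdeg, Finset.sum_range_succ, hlead, one_smul] at hCH
  have hlower : (∑ k ∈ Finset.range (Fintype.card n), A.charpoly.coeff k • A ^ k) i j = 0 := by
    simp only [sum_apply, smul_apply]
    exact Finset.sum_eq_zero fun k hk => by rw [h k (Finset.mem_range.mp hk), smul_zero]
  rwa [add_apply, hlower, zero_add] at hCH

theorem nat_pow_card_apply_eq_zero (A : Matrix n n ℕ) {i j : n}
    (h : ∀ k < Fintype.card n, (A ^ k) i j = 0) : (A ^ Fintype.card n) i j = 0 := by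
  have hcast : ∀ k, ((A.map (Nat.castRingHom ℤ)) ^ k) i j = ((A ^ k) i j : ℤ) := fun k => by
    rw [← Matrix.map_pow]; rfl
  exact_mod_cast (hcast _).symm.trans
    (pow_card_apply_eq_zero _ fun k hk => by rw [hcast, h k hk, Nat.cast_zero])

end Matrix

theorem exists_pos_forall_le_mul_of_eq_zero_imp {ι : Type*} [Fintype ι] (f g : ι → ℕ)
    (h : ∀ x, g x = 0 → f x = 0) : ∃ q, 0 < q ∧ ∀ x, f x ≤ q * g x := by
  refine ⟨∑ y, f y + 1, Nat.succ_pos _, fun x => ?_⟩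
  rcases Nat.eq_zero_or_pos (g x) with hx | hx
  · simp [h x hx]
  · calc f x ≤ ∑ y, f y := Finset.single_le_sum_of_canonicallyOrdered (Finset.mem_univ x)
      _ ≤ ∑ y, f y + 1 := Nat.le_succ _
      _ ≤ (∑ y, f y + 1) * g x := Nat.le_mul_of_pos_right _ hx

theorem depthIneq_two_mul_rows_sub_one {r s : ℕ} (M : Matrix (Fin r) (Fin s) ℕ)
    (hM : Irredundant M) :
    ∃ q : ℕ, 0 < q ∧ ∀ i i', evenPow M r i i' ≤ q * evenPow M (r - 1) i i' := by
  set S := M * Mᵀ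
  have hdiag : ∀ i, 1 ≤ S i i := fun i => M.one_le_mul_transpose_apply_self (hM.1 i)
  have hsupport : ∀ p : Fin r × Fin r, (S ^ (r - 1)) p.1 p.2 = 0 → (S ^ r) p.1 p.2 = 0 := by
    intro ⟨i, i'⟩ h0
    simpa using S.nat_pow_card_apply_eq_zero fun k hk => Nat.eq_zero_of_le_zero <|
      h0 ▸ S.monotone_pow_apply_of_one_le_diag hdiag i i' (by rw [Fintype.card_fin] at hk; omega)
  obtain ⟨q, hq, hle⟩ := exists_pos_forall_le_mul_of_eq_zero_imp _ _ hsupport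
  exact ⟨q, hq, fun i i' => hle (i, i')⟩
end

section
/- Let M be an r×s and N a p×q irredundant non-negative integer matrix. If M satisfies a depth n inequality (M^{n+1} ≤ q₁M^{n-1}) and N satisfies a depth m inequality with m ≤ n, then the Kronecker (tensor) product M⊗N satisfies a depth n inequality: (M⊗N)^{n+1} ≤ q·(M⊗N)^{n-1} for some positive integer q. In particular, the depth of M⊗N is at most max(depth M, depth N). -/
open Matrix

open Kronecker

/-!
Transposition commutes with the Kronecker product, so the alternating powers of `M ⊗ₖ N` are the
Kronecker products of those of `M` and `N`, and entrywise inequalities `A ≤ q₁ B`, `C ≤ q₂ D`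
multiply to `A ⊗ₖ C ≤ q₁ q₂ (B ⊗ₖ D)`. It remains to raise the depth of `N` from `m` to `n`:
multiplying a depth `n` inequality on the right by `M` or `Mᵀ` gives one of depth `n + 1`.
-/

theorem Matrix.kronecker_pow {α m n : Type*} [CommSemiring α] [Fintype m] [Fintype n]
    [DecidableEq m] [DecidableEq n] (A : Matrix m m α) (B : Matrix n n α) (k : ℕ) :
    (A ⊗ₖ B) ^ k = (A ^ k) ⊗ₖ (B ^ k) := by
  induction k with
  | zero => simp only [pow_zero, one_kronecker_one]
  | succ k ih => rw [pow_succ, pow_succ, pow_succ, ih, mul_kronecker_mul]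

section EntrywiseBound

variable {I J K L : Type*}

theorem mul_apply_le_mul_of_le [Fintype J] {A B : Matrix I J ℕ} {q : ℕ}
    (h : ∀ i j, A i j ≤ q * B i j) (C : Matrix J K ℕ) (i : I) (k : K) :
    (A * C) i k ≤ q * (B * C) i k := by
  simp only [mul_apply, Finset.mul_sum, ← mul_assoc]
  exact Finset.sum_le_sum fun j _ => Nat.mul_le_mul_right _ (h i j)

theorem kronecker_apply_le_mul_of_le {A B : Matrix I J ℕ} {C D : Matrix K L ℕ} {q₁ q₂ : ℕ}
    (hAB : ∀ i j, A i j ≤ q₁ * B i j) (hCD : ∀ k l, C k l ≤ q₂ * D k l)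
    (ik : I × K) (jl : J × L) : (A ⊗ₖ C) ik jl ≤ q₁ * q₂ * (B ⊗ₖ D) ik jl := by
  simp only [kroneckerMap_apply]
  calc A ik.1 jl.1 * C ik.2 jl.2
      ≤ q₁ * B ik.1 jl.1 * (q₂ * D ik.2 jl.2) := Nat.mul_le_mul (hAB _ _) (hCD _ _)
    _ = q₁ * q₂ * (B ik.1 jl.1 * D ik.2 jl.2) := by ring

end EntrywiseBound

section AlternatingPowers

variable {I J K L : Type*} [Fintype I] [Fintype J] [Fintype K] [Fintype L]
  [DecidableEq I] [DecidableEq K]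

theorem evenPow_succ (M : Matrix I J ℕ) (k : ℕ) : evenPow M (k + 1) = oddPow M k * Mᵀ := by
  rw [evenPow, oddPow, pow_succ, Matrix.mul_assoc]

theorem oddPow_eq_evenPow_mul (M : Matrix I J ℕ) (k : ℕ) : oddPow M k = evenPow M k * M := rfl

theorem evenPow_kronecker (M : Matrix I J ℕ) (N : Matrix K L ℕ) (k : ℕ) :
    evenPow (M ⊗ₖ N) k = evenPow M k ⊗ₖ evenPow N k := by
  rw [evenPow, evenPow, evenPow, ← kroneckerMap_transpose, ← mul_kronecker_mul, kronecker_pow]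

theorem oddPow_kronecker (M : Matrix I J ℕ) (N : Matrix K L ℕ) (k : ℕ) :
    oddPow (M ⊗ₖ N) k = oddPow M k ⊗ₖ oddPow N k := by
  rw [oddPow_eq_evenPow_mul, oddPow_eq_evenPow_mul, oddPow_eq_evenPow_mul, evenPow_kronecker,
    mul_kronecker_mul]

namespace DepthIneq

theorem succ {M : Matrix I J ℕ} {n q : ℕ} (hn : 1 ≤ n) (h : DepthIneq M n q) :
    DepthIneq M (n + 1) q := by
  refine ⟨fun k hk i i' => ?_, fun k hk i j => ?_⟩
  · obtain ⟨k, rfl⟩ : ∃ k', k = k' + 1 := Nat.exists_eq_add_one.mpr (by omega)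
    rw [evenPow_succ, evenPow_succ]
    exact mul_apply_le_mul_of_le (h.2 k (by omega)) Mᵀ i i'
  · rw [oddPow_eq_evenPow_mul, oddPow_eq_evenPow_mul]
    exact mul_apply_le_mul_of_le (h.1 k (by omega)) M i j

theorem mono {M : Matrix I J ℕ} {m n q : ℕ} (hm : 1 ≤ m) (hmn : m ≤ n) (h : DepthIneq M m q) :
    DepthIneq M n q := by
  induction n, hmn using Nat.le_induction with
  | base => exact h
  | succ n hmn ih => exact ih.succ (hm.trans hmn)

theorem kronecker {M : Matrix I J ℕ} {N : Matrix K L ℕ} {n q₁ q₂ : ℕ}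
    (hM : DepthIneq M n q₁) (hN : DepthIneq N n q₂) : DepthIneq (M ⊗ₖ N) n (q₁ * q₂) := by
  refine ⟨fun k hk => ?_, fun k hk => ?_⟩
  · rw [evenPow_kronecker, evenPow_kronecker]
    exact kronecker_apply_le_mul_of_le (hM.1 k hk) (hN.1 k hk)
  · rw [oddPow_kronecker, oddPow_kronecker]
    exact kronecker_apply_le_mul_of_le (hM.2 k hk) (hN.2 k hk)

end DepthIneq

end AlternatingPowers

theorem depthIneq_kronecker_general {r s p t : ℕ}
    (M : Matrix (Fin r) (Fin s) ℕ) (N : Matrix (Fin p) (Fin t) ℕ)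
    (n m : ℕ) (hm : 2 ≤ m) (hmn : m ≤ n)
    (q₁ q₂ : ℕ) (hq₁ : 0 < q₁) (hq₂ : 0 < q₂)
    (h₁ : DepthIneq M n q₁) (h₂ : DepthIneq N m q₂) :
    ∃ q : ℕ, 0 < q ∧ DepthIneq (M ⊗ₖ N) n q :=
  ⟨q₁ * q₂, Nat.mul_pos hq₁ hq₂, h₁.kronecker (h₂.mono (by omega) hmn)⟩

theorem depthIneq_kronecker {r s p t : ℕ}
    (M : Matrix (Fin r) (Fin s) ℕ) (N : Matrix (Fin p) (Fin t) ℕ)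
    (hM : Irredundant M) (hN : Irredundant N)
    (n m : ℕ) (hm : 2 ≤ m) (hmn : m ≤ n)
    (q₁ q₂ : ℕ) (hq₁ : 0 < q₁) (hq₂ : 0 < q₂)
    (h₁ : DepthIneq M n q₁) (h₂ : DepthIneq N m q₂) :
    ∃ q : ℕ, 0 < q ∧ DepthIneq (M ⊗ₖ N) n q :=
  depthIneq_kronecker_general M N n m hm hmn q₁ q₂ hq₁ hq₂ h₁ h₂
end

section
/- If an irredundant non-negative integer matrix M satisfies a depth n inequality M^{n+1} ≤ q·M^{n-1}, then its transpose M^t satisfies a depth (n+1) inequality: (M^t)^{n+2} ≤ q·(M^t)^n. Moreover, if n is even, then M^t satisfies the depth n inequality (M^t)^{n+1} ≤ q·(M^t)^{n-1}. -/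
open Matrix

/-!
Every power of `Mᵀ` of order at least one is `Mᵀ` times a power of `M` of one order less, and
the odd powers of `Mᵀ` are the transposes of those of `M`. Multiplying a depth `n` inequality
for `M` on the left by `Mᵀ` therefore gives the depth `n + 1` inequality for `Mᵀ`; for even `n`
both sides are odd powers, and transposing gives the depth `n` inequality for `Mᵀ`.
-/

theorem Matrix.mul_pow_mul_eq_mul_mul_pow {m n α : Type*} [Fintype m] [Fintype n]
    [DecidableEq m] [DecidableEq n] [Semiring α] (A : Matrix m n α) (B : Matrix n m α)
    (k : ℕ) : (A * B) ^ k * A = A * (B * A) ^ k := by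
  induction k with
  | zero => simp
  | succ k ih =>
    rw [pow_succ', Matrix.mul_assoc, ih, pow_succ']
    simp only [Matrix.mul_assoc]

theorem Matrix.mul_apply_le_mul_mul_apply {l m n : Type*} [Fintype m] (C : Matrix l m ℕ)
    {A B : Matrix m n ℕ} {q : ℕ} (hAB : ∀ i j, A i j ≤ q * B i j) (i : l) (j : n) :
    (C * A) i j ≤ q * (C * B) i j := by
  simp only [mul_apply, Finset.mul_sum]
  refine Finset.sum_le_sum fun x _ => ?_
  calc C i x * A x j ≤ C i x * (q * B x j) := Nat.mul_le_mul_left _ (hAB x j)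
    _ = q * (C i x * B x j) := by ring

section

variable {I J : Type*} [Fintype I] [Fintype J] [DecidableEq I] [DecidableEq J]

theorem evenPow_transpose_succ (M : Matrix I J ℕ) (k : ℕ) :
    evenPow Mᵀ (k + 1) = Mᵀ * oddPow M k := by
  rw [evenPow, oddPow, transpose_transpose, pow_succ', Matrix.mul_assoc,
    ← mul_pow_mul_eq_mul_mul_pow]

theorem oddPow_transpose_eq_mul_evenPow (M : Matrix I J ℕ) (k : ℕ) :
    oddPow Mᵀ k = Mᵀ * evenPow M k := by
  rw [oddPow, evenPow, transpose_transpose, mul_pow_mul_eq_mul_mul_pow]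

theorem oddPow_transpose (M : Matrix I J ℕ) (k : ℕ) : oddPow Mᵀ k = (oddPow M k)ᵀ := by
  rw [oddPow_transpose_eq_mul_evenPow, evenPow, oddPow, transpose_mul, transpose_pow,
    transpose_mul, transpose_transpose]

theorem DepthIneq.transpose_succ {M : Matrix I J ℕ} {n q : ℕ} (hn : n ≠ 0)
    (h : DepthIneq M n q) : DepthIneq Mᵀ (n + 1) q := by
  constructor
  · rintro (_ | k) hk i i'
    · omega
    rw [evenPow_transpose_succ, evenPow_transpose_succ]
    exact mul_apply_le_mul_mul_apply Mᵀ (h.2 k (by omega)) i i'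
  · intro k hk i j
    rw [oddPow_transpose_eq_mul_evenPow, oddPow_transpose_eq_mul_evenPow]
    exact mul_apply_le_mul_mul_apply Mᵀ (h.1 k (by omega)) i j

theorem DepthIneq.transpose_of_even {M : Matrix I J ℕ} {n q : ℕ} (hn : Even n)
    (h : DepthIneq M n q) : DepthIneq Mᵀ n q := by
  obtain ⟨m, rfl⟩ := hn
  constructor
  · intro k hk
    omega
  · intro k hk i j
    rw [oddPow_transpose, oddPow_transpose]
    exact h.2 k hk j i

end

theorem depthIneq_transpose_general {r s : ℕ} (M : Matrix (Fin r) (Fin s) ℕ)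
    (n : ℕ) (hn : 2 ≤ n) (q : ℕ)
    (h : DepthIneq M n q) :
    DepthIneq Mᵀ (n + 1) q ∧ (Even n → DepthIneq Mᵀ n q) :=
  ⟨h.transpose_succ (by omega), fun hev => h.transpose_of_even hev⟩

theorem depthIneq_transpose {r s : ℕ} (M : Matrix (Fin r) (Fin s) ℕ)
    (hM : Irredundant M) (n : ℕ) (hn : 2 ≤ n) (q : ℕ) (hq : 0 < q)
    (h : DepthIneq M n q) :
    DepthIneq Mᵀ (n + 1) q ∧ (Even n → DepthIneq Mᵀ n q) :=
  depthIneq_transpose_general M n hn q h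
end

section
/- Let H be a subgroup of a finite group G and suppose two elements of H that are conjugate in G are always conjugate in H. Let T: CF(H) → CF(H) be the induction-restriction map χ ↦ (χ↑G)↓_H on complex class functions. Then T is surjective (equivalently, all eigenvalues of T on CF(H) are nonzero), and the nonzero eigenvalues of T are exactly the numbers (|G|/|H|)·(|C ∩ H|/|C|) for conjugacy classes C of G meeting H, with eigenvectors the characteristic functions of C ∩ H. -/
open scoped Classical

variable {G : Type*}

/-- Induction of a class function from a subgroup `H` of a finite group `G`. -/
noncomputable def indCF [Group G] [Fintype G] (H : Subgroup G) [Fintype H]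
    (f : H → ℂ) : G → ℂ :=
  fun g => (Nat.card H : ℂ)⁻¹ *
    ∑ x : G, if hx : x⁻¹ * g * x ∈ H then f ⟨x⁻¹ * g * x, hx⟩ else 0

/-- The induction-restriction operator `T : CF(H) → CF(H)`,
`χ ↦ (χ↑G)↓_H`. -/
noncomputable def Tcf [Group G] [Fintype G] (H : Subgroup G) [Fintype H]
    (f : H → ℂ) : H → ℂ :=
  fun h => indCF H f ↑h

/-- A class function on a finite group. -/
def IsClassFun {X : Type*} [Group X] (f : X → ℂ) : Prop :=
  ∀ x y : X, f (x * y * x⁻¹) = f y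

/-- The scalar `(|G|/|H|)·(|C∩H|/|C|)` attached to the `G`-conjugacy class
`C` of an element `c`. -/
noncomputable def eigval [Group G] [Fintype G] (H : Subgroup G) (c : G) : ℂ :=
  ((Nat.card G : ℂ) * (Nat.card {x : G // IsConj c x ∧ x ∈ H} : ℂ)) /
    ((Nat.card H : ℂ) * (Nat.card {x : G // IsConj c x} : ℂ))

/-!
If `f : H → ℂ` is constant on the traces in `H` of the conjugacy classes of `G`, every `x` with
`x⁻¹ h x ∈ H` contributes `f h` to `(f↑G)(h)`, so `(Tf)(h)` is `f h` times the number of such `x`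
divided by `|H|`. By orbit–stabilizer for conjugation that number is
`|C_G(h)| · |hᴳ ∩ H| = |G| · |hᴳ ∩ H| / |hᴳ|`, giving `(Tf)(h) = eigval H h · f h`.
When `G`-conjugacy in `H` is `H`-conjugacy, every class function on `H` is of this kind, so `T`
is multiplication by the nowhere vanishing class function `eigval H`.
-/

theorem MulAction.nat_card_smul_mem_eq {M α : Type*} [Group M] [MulAction M α] (a : α)
    (S : Set α) :
    Nat.card {g : M // g • a ∈ S} = Nat.card (stabilizer M a) * Nat.card ↥(orbit M a ∩ S) := by
  let t : Set (M ⧸ stabilizer M a) := {q | ((orbitEquivQuotientStabilizer M a).symm q : α) ∈ S}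
  have ht : t ≃ ↥(orbit M a ∩ S) :=
    ((orbitEquivQuotientStabilizer M a).symm.subtypeEquiv fun _ => Iff.rfl).trans
      (Equiv.subtypeSubtypeEquivSubtypeInter _ _)
  -- `g • a` only depends on the coset of `g` modulo the stabilizer
  rw [← Nat.card_congr ht, ← QuotientGroup.card_preimage_mk]
  rfl

theorem nat_card_conj_mem_mul_nat_card_isConj [Group G] (h : G) (S : Set G) :
    Nat.card {x : G // x⁻¹ * h * x ∈ S} * Nat.card {c : G // IsConj h c}
      = Nat.card G * Nat.card {c : G // IsConj h c ∧ c ∈ S} := by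
  have hcount (T : Set G) : Nat.card {x : G // x⁻¹ * h * x ∈ T}
      = Nat.card (MulAction.stabilizer (ConjAct G) h) * Nat.card {c : G // IsConj h c ∧ c ∈ T} := by
    have e : {x : G // x⁻¹ * h * x ∈ T} ≃ {g : ConjAct G // g • h ∈ T} :=
      ((Equiv.inv G).trans ConjAct.toConjAct.toEquiv).subtypeEquiv fun x => by
        simp only [Equiv.trans_apply, Equiv.inv_apply, MulEquiv.toEquiv_eq_coe,
          MulEquiv.coe_toEquiv, ConjAct.toConjAct_smul, inv_inv]
    have e' : ↥(MulAction.orbit (ConjAct G) h ∩ T) ≃ {c : G // IsConj h c ∧ c ∈ T} :=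
      Equiv.subtypeEquivRight fun c =>
        and_congr_left' (ConjAct.mem_orbit_conjAct.trans isConj_comm)
    rw [Nat.card_congr e, MulAction.nat_card_smul_mem_eq, Nat.card_congr e']
  have hG := hcount Set.univ
  simp only [Set.mem_univ, and_true, Nat.card_subtype_true] at hG
  rw [hcount S, hG]
  ring

theorem IsClassFun.eq_of_isConj {X : Type*} [Group X] {f : X → ℂ} (hf : IsClassFun f)
    {a b : X} (hab : IsConj a b) : f a = f b := by
  obtain ⟨c, rfl⟩ := isConj_iff.mp hab
  exact (hf c a).symm

section Subgroup

variable [Group G] [Fintype G] (H : Subgroup G)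

theorem eigval_eq_card_div (h : G) :
    eigval H h = Nat.card {x : G // x⁻¹ * h * x ∈ H} / Nat.card H := by
  have hC : (Nat.card {c : G // IsConj h c} : ℂ) ≠ 0 := by
    have : Nonempty {c : G // IsConj h c} := ⟨⟨h, IsConj.refl h⟩⟩
    exact_mod_cast Nat.card_pos.ne'
  have hH : (Nat.card H : ℂ) ≠ 0 := by exact_mod_cast Nat.card_pos.ne'
  have hcard := congrArg (Nat.cast : ℕ → ℂ) (nat_card_conj_mem_mul_nat_card_isConj h H)
  push_cast at hcard
  rw [eigval, div_eq_div_iff (mul_ne_zero hH hC) hH]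
  linear_combination (Nat.card H : ℂ) * hcard.symm

theorem eigval_ne_zero (h : H) : eigval H h ≠ 0 := by
  have : Nonempty {x : G // x⁻¹ * h * x ∈ H} := ⟨⟨1, by simp⟩⟩
  rw [eigval_eq_card_div]
  exact div_ne_zero (by exact_mod_cast Nat.card_pos.ne') (by exact_mod_cast Nat.card_pos.ne')

theorem eigval_eq_of_isConj {c d : G} (hcd : IsConj c d) : eigval H c = eigval H d := by
  rw [eigval, eigval,
    Nat.card_congr (Equiv.subtypeEquivRight fun _ =>
      and_congr_left' ⟨hcd.symm.trans, hcd.trans⟩),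
    Nat.card_congr (Equiv.subtypeEquivRight fun _ => ⟨hcd.symm.trans, hcd.trans⟩)]

theorem isClassFun_eigval : IsClassFun fun h : H => eigval H h := fun x y =>
  eigval_eq_of_isConj H (isConj_iff.mpr ⟨(x : G)⁻¹, by push_cast; group⟩)

theorem Tcf_apply_of_isConj [Fintype H] {f : H → ℂ}
    (hf : ∀ a b : H, IsConj (a : G) b → f a = f b) (h : H) : Tcf H f h = eigval H h * f h := by
  have hsum : ∀ x : G, (if hx : x⁻¹ * h * x ∈ H then f ⟨x⁻¹ * h * x, hx⟩ else 0)
      = if x⁻¹ * h * x ∈ H then f h else 0 := fun x => by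
    split_ifs with hx
    · exact hf _ _ (isConj_iff.mpr ⟨x, by group⟩)
    · rfl
  rw [Tcf, indCF, Finset.sum_congr rfl fun x _ => hsum x, ← Finset.sum_filter,
    Finset.sum_const, nsmul_eq_mul, ← Fintype.card_subtype, ← Nat.card_eq_fintype_card,
    eigval_eq_card_div]
  ring

theorem Tcf_eq_eigval_mul_of_isClassFun [Fintype H]
    (hfus : ∀ x y : H, IsConj (x : G) (y : G) → IsConj x y) {f : H → ℂ}
    (hf : IsClassFun f) : Tcf H f = fun h : H => eigval H h * f h :=
  funext <| Tcf_apply_of_isConj H fun a b hab => hf.eq_of_isConj (hfus a b hab)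

theorem Tcf_indicator_isConj [Fintype H] (c : G) :
    Tcf H (fun h : H => if IsConj c h then (1 : ℂ) else 0) =
      fun h : H => eigval H c * (if IsConj c h then (1 : ℂ) else 0) := by
  refine funext fun h => (Tcf_apply_of_isConj H (fun a b hab => ?_) h).trans ?_
  · exact if_congr ⟨fun hca => hca.trans hab, fun hcb => hcb.trans hab.symm⟩ rfl rfl
  · split_ifs with hch
    · rw [eigval_eq_of_isConj H hch]
    · simp

end Subgroup

/-- If any two elements of `H` conjugate in `G` are already
conjugate in `H`, then the induction-restriction map `T` on class functions
of `H` is surjective, the characteristic function of `C ∩ H` (for `C` a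
`G`-conjugacy class meeting `H`) is a nonzero eigenvector of `T` with
eigenvalue `(|G|/|H|)·(|C∩H|/|C|)`, and every nonzero eigenvalue of `T` on
class functions arises this way. -/
theorem T_surjective_and_eigenvalues [Group G] [Fintype G]
    (H : Subgroup G) [Fintype H]
    (hfus : ∀ x y : H, IsConj (x : G) (y : G) → IsConj x y) :
    (∀ f : H → ℂ, IsClassFun f → ∃ u : H → ℂ, IsClassFun u ∧ Tcf H u = f) ∧
    (∀ c : G, (∃ h : H, IsConj c (h : G)) →
      (fun h : H => if IsConj c (h : G) then (1 : ℂ) else 0) ≠ 0 ∧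
      Tcf H (fun h : H => if IsConj c (h : G) then (1 : ℂ) else 0) =
        fun h : H => eigval H c * (if IsConj c (h : G) then (1 : ℂ) else 0)) ∧
    (∀ μ : ℂ, μ ≠ 0 →
      (∃ f : H → ℂ, IsClassFun f ∧ f ≠ 0 ∧ Tcf H f = fun h => μ * f h) →
      ∃ c : G, (∃ h : H, IsConj c (h : G)) ∧ μ = eigval H c) := by
  refine ⟨fun f hf => ?_, fun c ⟨h₀, hc₀⟩ => ?_, fun μ _ ⟨f, hf, hf0, hTf⟩ => ?_⟩
  · have hu : IsClassFun fun h : H => f h / eigval H h := fun x y => by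
      simp only [hf x y, isClassFun_eigval H x y]
    refine ⟨_, hu, ?_⟩
    rw [Tcf_eq_eigval_mul_of_isClassFun H hfus hu]
    exact funext fun h => mul_div_cancel₀ (f h) (eigval_ne_zero H h)
  · exact ⟨fun h0 => one_ne_zero ((if_pos hc₀).symm.trans (congrFun h0 h₀)),
      Tcf_indicator_isConj H c⟩
  · obtain ⟨a, ha⟩ := Function.ne_iff.mp hf0
    refine ⟨a, ⟨a, IsConj.refl _⟩, mul_right_cancel₀ ha ?_⟩
    exact congrFun (hTf.symm.trans (Tcf_eq_eigval_mul_of_isClassFun H hfus hf)) a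
end

section
/- Let H ≤ G be finite groups such that the core of H in G is the intersection of m conjugates of H: there exist x_1 = 1, x_2, ..., x_m ∈ G with ⋂_{i=1}^m x_iHx_i^{-1} = core_G(H). Then for every irreducible character α of H and every β an irreducible constituent of α↓_N (where N = core_G(H)), the character Ind_N^H(β^z) (for a suitable z ∈ G normalizing the situation) is a constituent of T^{m-1}(α), where T(α) = (α↑G)↓_H. In particular (Mackey step): for any x ∈ G, Ind_{H∩xHx^{-1}}^H(Res_{H∩xHx^{-1}}^{xHx^{-1}}(α^x)) is a constituent of T(α) = Res_H^G(Ind_H^G(α)). -/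
open scoped Classical

variable {G : Type}

/-- Class functions on a subgroup `K ≤ G` are encoded as functions `G → ℂ`
vanishing off `K`; `resFn K f` is the restriction (extended by zero) of
`f : G → ℂ` to `K`. -/
noncomputable def resFn [Group G] (K : Subgroup G) (f : G → ℂ) : G → ℂ :=
  fun g => if g ∈ K then f g else 0

/-- Induction of a class function (encoded as a function `G → ℂ` vanishing
off `K`) from `K` to an intermediate subgroup `L` (take `L = ⊤` for
induction up to `G`). -/
noncomputable def indFn [Group G] [Fintype G] (K L : Subgroup G)
    (f : G → ℂ) : G → ℂ :=
  fun g => if g ∈ L then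
    (Nat.card K : ℂ)⁻¹ * ∑ y : G, (if y ∈ L then f (y⁻¹ * g * y) else 0)
  else 0

/-- The inner product of two class functions of `K` (encoded as functions on
`G` vanishing off `K`). -/
noncomputable def innerOn [Group G] [Fintype G] (K : Subgroup G)
    (f h : G → ℂ) : ℂ :=
  (Nat.card K : ℂ)⁻¹ * ∑ x : G, if x ∈ K then f x * (starRingEnd ℂ) (h x) else 0

/-- `f : G → ℂ` is the character of an irreducible representation of the
subgroup `K`, extended by zero off `K`. -/
noncomputable def IsIrrCharOn [Group G] (K : Subgroup G) (f : G → ℂ) : Prop :=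
  ∃ V : FDRep ℂ ↥K, CategoryTheory.Simple V ∧
    f = fun g => if hg : g ∈ K then V.character ⟨g, hg⟩ else 0

/-- `f : G → ℂ` is the character of a (not necessarily irreducible)
representation of the subgroup `K`, extended by zero off `K`. -/
noncomputable def IsCharOn [Group G] (K : Subgroup G) (f : G → ℂ) : Prop :=
  ∃ V : FDRep ℂ ↥K, f = fun g => if hg : g ∈ K then V.character ⟨g, hg⟩ else 0

/-- The induction-restriction operator `T(α) = (α↑G)↓_H` on class functions
of `H` encoded as functions on `G` vanishing off `H`. -/
noncomputable def Tfn [Group G] [Fintype G] (H : Subgroup G) (f : G → ℂ) :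
    G → ℂ :=
  resFn H (indFn H ⊤ f)

/-- The conjugate `f^z` of a class function, `(f^z)(g) = f(z⁻¹ g z)`. -/
noncomputable def conjFn [Group G] (z : G) (f : G → ℂ) : G → ℂ :=
  fun g => f (z⁻¹ * g * z)

/-!
For `U, H ≤ G`, a character `θ` of `U` and `v ∈ G`, Mackey's formula writes `(θ↑G)↓H` as a sum
over the `(H, U)`-double cosets: the summand of `H v U` is `Ind_{H ∩ vUv⁻¹}^H (θ^v)`, and the
others add up to a character of `H`. Starting from `α = Ind_H^H α`, each application of `T`
(with transitivity of induction) intersects the inducing subgroup with one more conjugate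
`x_i H x_i⁻¹`, so `T^{m-1}(α)` contains `Ind_N^H (α^z↓N)` with `N = core_G(H)`. As `N` is normal
and `β` is a constituent of `α↓N`, `β^z` is a constituent of `α^z↓N`; inducing to `H` finishes.

Every character here comes from an actual representation: the summands of Mackey's formula are
traces of left translation on spaces of `U`-equivariant functions `G → W` supported on unions of
double cosets, and `α↓N = β + δ` holds because the simple module `β` is projective, hence a direct
summand.
-/

namespace LinearMap

variable {R M : Type*} [CommRing R] [AddCommGroup M] [Module R M] [Module.Free R M]
  [Module.Finite R M]

theorem trace_restrict_eq_trace_comp (p : Submodule R M) [Module.Free R p] [Module.Finite R p]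
    {π : M →ₗ[R] M} (hπ : ∀ x, π x ∈ p) (hπp : ∀ x ∈ p, π x = x)
    (f : M →ₗ[R] M) (hf : ∀ x ∈ p, f x ∈ p) :
    trace R p (f.restrict hf) = trace R M (f ∘ₗ π) := by
  have : f ∘ₗ π = (f ∘ₗ p.subtype) ∘ₗ π.codRestrict p hπ := rfl
  rw [this, trace_comp_comm']
  congr 1
  ext x
  simp [hπp _ (hf x x.2)]

theorem trace_pi_eq_sum {ι : Type*} [Fintype ι] [DecidableEq ι] (F : (ι → M) →ₗ[R] (ι → M)) :
    trace R (ι → M) F = ∑ i, trace R M (proj i ∘ₗ F ∘ₗ single R (fun _ => M) i) := by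
  have hF : F = ∑ i, (F ∘ₗ single R (fun _ => M) i) ∘ₗ proj i := by
    refine LinearMap.ext fun x => ?_
    simp only [LinearMap.sum_apply, comp_apply, ← map_sum]
    exact congrArg F (Finset.univ_sum_single x).symm
  conv_lhs => rw [hF]
  rw [map_sum]
  exact Finset.sum_congr rfl fun i _ => trace_comp_comm' _ _

end LinearMap

namespace Module.End

open LinearMap

variable {V : Type*} [AddCommGroup V] [Module ℂ V] [FiniteDimensional ℂ V]

theorem IsSemisimple.trace_pow_eq_sum {f : End ℂ V} (hf : f.IsSemisimple) :
    ∃ s : Finset ℂ, (∀ μ ∈ s, f.HasEigenvalue μ) ∧ ∀ k : ℕ,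
      trace ℂ V (f ^ k) = ∑ μ ∈ s, μ ^ k * finrank ℂ (f.eigenspace μ) := by
  have hint := DirectSum.isInternal_submodule_of_iSupIndep_of_iSup_eq_top
    f.eigenspaces_iSupIndep hf.iSup_eigenspace_eq_top
  have hfin : {μ | f.eigenspace μ ≠ ⊥}.Finite :=
    WellFoundedGT.finite_ne_bot_of_iSupIndep f.eigenspaces_iSupIndep
  refine ⟨hfin.toFinset, fun μ hμ => hfin.mem_toFinset.1 hμ, fun k => ?_⟩
  have hpow : ∀ μ, ∀ x ∈ f.eigenspace μ, (f ^ k) x = μ ^ k • x := by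
    intro μ x hx
    induction k with
    | zero => simp
    | succ k ih =>
      rw [pow_succ, mul_apply, mem_eigenspace_iff.1 hx, map_smul, ih, smul_smul, pow_succ']
  have hmaps : ∀ μ, Set.MapsTo (f ^ k) (f.eigenspace μ) (f.eigenspace μ) :=
    fun μ => mapsTo_genEigenspace_of_comm (Commute.self_pow f k) μ 1
  rw [trace_eq_sum_trace_restrict' hint hfin hmaps]
  refine Finset.sum_congr rfl fun μ _ => ?_
  have : (f ^ k).restrict (hmaps μ) = μ ^ k • LinearMap.id := by
    ext ⟨x, hx⟩
    exact hpow μ x hx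
  rw [this, map_smul, trace_id, smul_eq_mul]

/-- An operator of finite order is diagonalisable with eigenvalues on the unit circle, where
`μ ^ (n - 1) = μ⁻¹ = conj μ`. -/
theorem trace_pow_pred_eq_conj {f : End ℂ V} {n : ℕ} (hn : n ≠ 0) (hf : f ^ n = 1) :
    trace ℂ V (f ^ (n - 1)) = starRingEnd ℂ (trace ℂ V f) := by
  have hss : f.IsSemisimple := by
    refine isSemisimple_of_squarefree_aeval_eq_zero
      (Polynomial.separable_X_pow_sub_C 1 (by exact_mod_cast hn) one_ne_zero).squarefree ?_
    simp [hf]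
  obtain ⟨s, hs, htrace⟩ := hss.trace_pow_eq_sum
  conv_rhs => rw [← pow_one f]
  rw [htrace, htrace, map_sum]
  refine Finset.sum_congr rfl fun μ hμ => ?_
  have hμn : μ ^ n = 1 := by
    obtain ⟨x, hx⟩ := (hs μ hμ).exists_hasEigenvector
    have := hx.pow_apply n
    rw [hf, one_apply] at this
    exact smul_left_injective ℂ hx.2 (this.symm.trans (one_smul ℂ x).symm)
  have : μ ^ (n - 1) = starRingEnd ℂ μ := by
    rw [← Complex.inv_eq_conj (Complex.norm_eq_one_of_pow_eq_one hμn hn)]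
    exact eq_inv_of_mul_eq_one_left (by rw [pow_sub_one_mul hn, hμn])
  simp [this]

end Module.End

namespace Representation

variable {X V : Type*} [Group X] [Finite X] [AddCommGroup V] [Module ℂ V] [FiniteDimensional ℂ V]

theorem character_inv (ρ : Representation ℂ X V) (g : X) :
    ρ.character g⁻¹ = starRingEnd ℂ (ρ.character g) := by
  have hn : orderOf g ≠ 0 := (orderOf_pos g).ne'
  have hinv : g⁻¹ = g ^ (orderOf g - 1) :=
    (eq_inv_of_mul_eq_one_left (by rw [pow_sub_one_mul hn, pow_orderOf_eq_one])).symm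
  rw [character, character, hinv, map_pow]
  exact Module.End.trace_pow_pred_eq_conj hn (by rw [← map_pow, pow_orderOf_eq_one, map_one])

end Representation

namespace FDRep

open CategoryTheory LinearMap

variable {X : Type} [Group X] [Fintype X]

/-- A nonzero map `A ⟶ B` splits because the simple `B` is projective; its kernel carries the
complementary character. -/
theorem exists_character_eq_add_of_simple (A B : FDRep ℂ X) [Simple B]
    (h : Module.finrank ℂ (A ⟶ B) ≠ 0) :
    ∃ D : FDRep ℂ X, ∀ g, A.character g = B.character g + D.character g := by
  obtain ⟨f, hf⟩ := Module.finrank_pos_iff_exists_ne_zero.1 (Nat.pos_of_ne_zero h)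
  have := epi_of_nonzero_to_simple hf
  obtain ⟨s, hs⟩ : ∃ s : B ⟶ A, s ≫ f = 𝟙 B := ⟨_, Projective.factorThru_comp _ _⟩
  set φ := f.hom.hom.hom
  set σ := s.hom.hom.hom
  have hφσ : φ ∘ₗ σ = LinearMap.id := by
    simpa using congrArg (fun ψ => ψ.hom.hom.hom) hs
  have hφ : ∀ g, φ ∘ₗ A.ρ g = B.ρ g ∘ₗ φ := fun g => by
    simpa using congrArg (fun ψ => ψ.hom.hom) (f.comm g)
  let K : Subrepresentation A.ρ :=
    ⟨ker φ, fun g v hv => by simp_all [← comp_apply φ (A.ρ g), hφ g]⟩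
  let π : Module.End ℂ A := LinearMap.id - σ ∘ₗ φ
  have hπ : ∀ v, π v ∈ ker φ := fun v => by
    simp [π, ← comp_apply φ σ, hφσ]
  have hπK : ∀ v ∈ ker φ, π v = v := fun v hv => by
    simp_all [π]
  refine ⟨FDRep.of K.toRepresentation, fun g => ?_⟩
  have hK : (FDRep.of K.toRepresentation).character g = trace ℂ A (A.ρ g ∘ₗ π) :=
    trace_restrict_eq_trace_comp (ker φ) hπ hπK _ (K.apply_mem_toSubmodule g)
  have hB : B.character g = trace ℂ A (A.ρ g ∘ₗ σ ∘ₗ φ) := by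
    rw [← comp_assoc, trace_comp_comm', ← comp_assoc, hφ, comp_assoc, hφσ, comp_id]
    rfl
  rw [hK, hB, ← map_add, ← comp_add, add_sub_cancel, comp_id]
  rfl

end FDRep

theorem Subgroup.mem_map_conj [Group G] {U : Subgroup G} {v g : G} :
    g ∈ U.map (MulAut.conj v).toMonoidHom ↔ v⁻¹ * g * v ∈ U := by
  rw [Subgroup.mem_map_equiv, MulAut.conj_symm_apply]

theorem Subgroup.Normal.map_conj_toMonoidHom_eq [Group G] {N : Subgroup G} [N.Normal] (z : G) :
    N.map (MulAut.conj z).toMonoidHom = N :=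
  Subgroup.Normal.map_conj_eq N z

namespace DoubleCoset

variable [Group G] {H K : Subgroup G} {a x : G}

theorem mul_left_mem_doubleCoset_iff {h : G} (hh : h ∈ H) :
    h * x ∈ doubleCoset a H K ↔ x ∈ doubleCoset a H K := by
  simp only [mem_doubleCoset, mul_assoc]
  constructor
  · rintro ⟨b, hb, k, hk, e⟩
    exact ⟨h⁻¹ * b, H.mul_mem (H.inv_mem hh) hb, k, hk,
      by rw [mul_assoc, ← e, inv_mul_cancel_left]⟩
  · rintro ⟨b, hb, k, hk, rfl⟩
    exact ⟨h * b, H.mul_mem hh hb, k, hk, by rw [mul_assoc]⟩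

theorem mul_right_mem_doubleCoset_iff {k : G} (hk : k ∈ K) :
    x * k ∈ doubleCoset a H K ↔ x ∈ doubleCoset a H K := by
  simp only [mem_doubleCoset]
  constructor
  · rintro ⟨b, hb, c, hc, e⟩
    exact ⟨b, hb, c * k⁻¹, K.mul_mem hc (K.inv_mem hk),
      by rw [← mul_assoc, ← e, mul_inv_cancel_right]⟩
  · rintro ⟨b, hb, c, hc, rfl⟩
    exact ⟨b, hb, c * k, K.mul_mem hc hk, by rw [mul_assoc]⟩

end DoubleCoset

section ClassFunctions

variable [Group G] {W : Type} [AddCommGroup W] [Module ℂ W]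

noncomputable def charFn (K : Subgroup G) (ρ : Representation ℂ K W) : G → ℂ :=
  fun g => if hg : g ∈ K then ρ.character ⟨g, hg⟩ else 0

theorem isCharOn_iff {K : Subgroup G} {f : G → ℂ} :
    IsCharOn K f ↔ ∃ V : FDRep ℂ K, f = charFn K V.ρ :=
  Iff.rfl

theorem isCharOn_charFn [FiniteDimensional ℂ W] (K : Subgroup G) (ρ : Representation ℂ K W) :
    IsCharOn K (charFn K ρ) :=
  ⟨FDRep.of ρ, rfl⟩

variable {K U N : Subgroup G} {θ φ : G → ℂ}

theorem IsCharOn.apply_of_notMem (hθ : IsCharOn K θ) {g : G} (hg : g ∉ K) : θ g = 0 := by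
  obtain ⟨V, rfl⟩ := isCharOn_iff.1 hθ
  exact dif_neg hg

theorem IsCharOn.apply_conj (hθ : IsCharOn K θ) {k : G} (hk : k ∈ K) (g : G) :
    θ (k⁻¹ * g * k) = θ g := by
  obtain ⟨V, rfl⟩ := isCharOn_iff.1 hθ
  have hiff : k⁻¹ * g * k ∈ K ↔ g ∈ K := by
    rw [K.mul_mem_cancel_right hk, K.mul_mem_cancel_left (K.inv_mem hk)]
  by_cases hg : g ∈ K
  · simp only [charFn, dif_pos hg, dif_pos (hiff.2 hg)]
    have := Representation.char_conj V.ρ ⟨g, hg⟩ ⟨k, hk⟩⁻¹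
    rwa [inv_inv] at this
  · simp only [charFn, dif_neg hg, dif_neg (mt hiff.1 hg)]

theorem IsCharOn.zero : IsCharOn K 0 := by
  refine ⟨FDRep.of (Representation.trivial ℂ K PUnit), funext fun g => ?_⟩
  by_cases hg : g ∈ K <;> simp [hg, FDRep.character]

theorem IsCharOn.add (hθ : IsCharOn K θ) (hφ : IsCharOn K φ) : IsCharOn K (θ + φ) := by
  obtain ⟨V, rfl⟩ := isCharOn_iff.1 hθ
  obtain ⟨V', rfl⟩ := isCharOn_iff.1 hφ
  refine ⟨FDRep.of (Representation.prod V.ρ V'.ρ), funext fun g => ?_⟩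
  by_cases hg : g ∈ K
  · simp only [charFn, Pi.add_apply, dif_pos hg]
    exact (LinearMap.trace_prodMap' _ _).symm
  · simp [charFn, hg]

theorem IsCharOn.res (hθ : IsCharOn U θ) (hKU : K ≤ U) : IsCharOn K (resFn K θ) := by
  obtain ⟨V, rfl⟩ := isCharOn_iff.1 hθ
  refine ⟨FDRep.of (V.ρ.comp (Subgroup.inclusion hKU)), funext fun g => ?_⟩
  by_cases hg : g ∈ K
  · simp only [resFn, charFn, if_pos hg, dif_pos hg, dif_pos (hKU hg)]
    rfl
  · simp [resFn, hg]

theorem IsCharOn.conj (hθ : IsCharOn U θ) (v : G) :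
    IsCharOn (U.map (MulAut.conj v).toMonoidHom) (conjFn v θ) := by
  obtain ⟨V, rfl⟩ := isCharOn_iff.1 hθ
  set K := U.map (MulAut.conj v).toMonoidHom
  let c : K →* U := ((MulAut.conj v).symm.toMonoidHom.comp K.subtype).codRestrict U
    fun k => by simpa using Subgroup.mem_map_conj.1 k.2
  refine ⟨FDRep.of (V.ρ.comp c), funext fun g => ?_⟩
  by_cases hg : g ∈ K
  · simp only [conjFn, charFn, dif_pos hg, dif_pos (Subgroup.mem_map_conj.1 hg)]
    rfl
  · simp [conjFn, charFn, hg, Subgroup.mem_map_conj.not.1 hg]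

theorem IsCharOn.conj_of_normal [N.Normal] (hθ : IsCharOn N θ) (z : G) :
    IsCharOn N (conjFn z θ) := by
  simpa only [Subgroup.Normal.map_conj_toMonoidHom_eq] using hθ.conj z

theorem IsCharOn.resFn_eq (hθ : IsCharOn K θ) : resFn K θ = θ := by
  funext g
  by_cases hg : g ∈ K
  · simp [resFn, hg]
  · simp [resFn, hg, hθ.apply_of_notMem hg]

theorem resFn_inf_map_conj_conjFn (hθ : IsCharOn U θ) (v : G) {t : G} (ht : t ∈ K) :
    resFn (K ⊓ U.map (MulAut.conj v).toMonoidHom) (conjFn v θ) t = conjFn v θ t := by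
  by_cases hU : v⁻¹ * t * v ∈ U
  · rw [resFn, if_pos (Subgroup.mem_inf.2 ⟨ht, Subgroup.mem_map_conj.2 hU⟩)]
  · rw [resFn, if_neg fun h => hU (Subgroup.mem_map_conj.1 (Subgroup.mem_inf.1 h).2), conjFn,
      hθ.apply_of_notMem hU]

theorem IsIrrCharOn.isCharOn (hθ : IsIrrCharOn K θ) : IsCharOn K θ :=
  let ⟨V, _, hV⟩ := hθ
  ⟨V, hV⟩

@[simp]
theorem conjFn_one (f : G → ℂ) : conjFn 1 f = f := by
  funext g
  simp [conjFn]

theorem conjFn_conjFn (v z : G) (f : G → ℂ) : conjFn v (conjFn z f) = conjFn (v * z) f := by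
  funext g
  simp [conjFn, mul_assoc]

theorem resFn_conjFn_resFn {K U : Subgroup G} {v : G} (hKU : ∀ k ∈ K, v⁻¹ * k * v ∈ U)
    (f : G → ℂ) : resFn K (conjFn v (resFn U f)) = resFn K (conjFn v f) := by
  funext g
  by_cases hg : g ∈ K <;> simp [resFn, conjFn, hg, hKU g]

theorem conjFn_resFn_of_normal [N.Normal] (z : G) (f : G → ℂ) :
    conjFn z (resFn N f) = resFn N (conjFn z f) := by
  funext g
  have : z⁻¹ * g * z ∈ N ↔ g ∈ N := by
    rw [← Subgroup.mem_map_conj, Subgroup.Normal.map_conj_toMonoidHom_eq]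
  simp [conjFn, resFn, this]

end ClassFunctions

section Constituents

variable [Group G]

def IsConstituentOn (K : Subgroup G) (f χ : G → ℂ) : Prop :=
  ∃ δ, IsCharOn K δ ∧ χ = f + δ

variable {K L : Subgroup G} {f χ ψ : G → ℂ}

theorem IsConstituentOn.refl (K : Subgroup G) (f : G → ℂ) : IsConstituentOn K f f :=
  ⟨0, .zero, (add_zero f).symm⟩

theorem IsConstituentOn.trans (h₁ : IsConstituentOn K f χ) (h₂ : IsConstituentOn K χ ψ) :
    IsConstituentOn K f ψ := by
  obtain ⟨δ₁, hδ₁, rfl⟩ := h₁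
  obtain ⟨δ₂, hδ₂, rfl⟩ := h₂
  exact ⟨δ₁ + δ₂, hδ₁.add hδ₂, add_assoc f δ₁ δ₂⟩

theorem IsConstituentOn.map {F : (G → ℂ) → G → ℂ} (hadd : ∀ a b, F (a + b) = F a + F b)
    (hchar : ∀ δ, IsCharOn K δ → IsCharOn L (F δ)) (h : IsConstituentOn K f χ) :
    IsConstituentOn L (F f) (F χ) := by
  obtain ⟨δ, hδ, rfl⟩ := h
  exact ⟨F δ, hchar δ hδ, hadd f δ⟩

theorem resFn_add (K : Subgroup G) (a b : G → ℂ) : resFn K (a + b) = resFn K a + resFn K b := by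
  funext g
  by_cases hg : g ∈ K <;> simp [resFn, hg]

variable [Fintype G]

theorem indFn_add (K L : Subgroup G) (a b : G → ℂ) :
    indFn K L (a + b) = indFn K L a + indFn K L b := by
  funext g
  by_cases hg : g ∈ L
  · simp only [indFn, if_pos hg, Pi.add_apply, ← mul_add, ← Finset.sum_add_distrib]
    congr 1
    refine Finset.sum_congr rfl fun y _ => ?_
    split_ifs <;> simp
  · simp [indFn, hg]

theorem Tfn_add (H : Subgroup G) (a b : G → ℂ) : Tfn H (a + b) = Tfn H a + Tfn H b := by
  simp only [Tfn, indFn_add, resFn_add]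

end Constituents

section Induction

variable [Group G] [Fintype G]

/-- The part of `Ind_U^G θ` coming from the conjugating elements in `S`. -/
noncomputable def mackeyFn (U : Subgroup G) (S : Set G) (θ : G → ℂ) : G → ℂ :=
  fun g => (Nat.card U : ℂ)⁻¹ * ∑ y : G, if y ∈ S then θ (y⁻¹ * g * y) else 0

theorem sum_ite_mem_subgroup (K : Subgroup G) (c : ℂ) :
    ∑ y : G, (if y ∈ K then c else 0) = Nat.card K * c := by
  rw [Finset.sum_ite, Finset.sum_const_zero, add_zero, Finset.sum_const, ← Fintype.card_subtype,
    Nat.card_eq_fintype_card, nsmul_eq_mul]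

variable {U H : Subgroup G} {θ : G → ℂ}

theorem indFn_eq_resFn_mackeyFn (U L : Subgroup G) (θ : G → ℂ) :
    indFn U L θ = resFn L (mackeyFn U L θ) :=
  rfl

theorem indFn_top_eq_mackeyFn (U : Subgroup G) (θ : G → ℂ) :
    indFn U ⊤ θ = mackeyFn U Set.univ θ := by
  funext g
  simp [indFn, mackeyFn]

theorem mackeyFn_add_mackeyFn_compl (U : Subgroup G) (S : Set G) (θ : G → ℂ) :
    mackeyFn U S θ + mackeyFn U Sᶜ θ = mackeyFn U Set.univ θ := by
  funext g
  simp only [mackeyFn, Pi.add_apply, ← mul_add, ← Finset.sum_add_distrib]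
  congr 1
  refine Finset.sum_congr rfl fun y _ => ?_
  by_cases hy : y ∈ S <;> simp [hy]

theorem resFn_mackeyFn_of_le (hUH : U ≤ H) (hθ : ∀ g ∉ U, θ g = 0) :
    resFn H (mackeyFn U H θ) = mackeyFn U H θ := by
  funext g
  by_cases hg : g ∈ H
  · simp [resFn, hg]
  · have hy : ∀ y ∈ H, y⁻¹ * g * y ∉ U := fun y hy hU =>
      hg (by simpa [H.mul_mem_cancel_right hy, H.mul_mem_cancel_left (H.inv_mem hy)] using hUH hU)
    simp only [resFn, mackeyFn, if_neg hg]
    rw [Finset.sum_eq_zero fun y _ => ?_, mul_zero]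
    split_ifs with hyH
    exacts [hθ _ (hy y hyH), rfl]

theorem mackeyFn_univ_mackeyFn (U H : Subgroup G) (θ : G → ℂ) :
    mackeyFn H Set.univ (mackeyFn U H θ) = mackeyFn U Set.univ θ := by
  funext g
  have hsum : ∑ y : G, ∑ w : G, (if w ∈ H then θ (w⁻¹ * (y⁻¹ * g * y) * w) else 0) =
      Nat.card H * ∑ y : G, θ (y⁻¹ * g * y) := by
    rw [Finset.sum_comm, ← sum_ite_mem_subgroup]
    refine Finset.sum_congr rfl fun w _ => ?_
    split_ifs
    · exact Fintype.sum_equiv (Equiv.mulRight w) _ _ fun y => by simp [mul_assoc]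
    · simp
  have hH : (Nat.card H : ℂ) ≠ 0 := Nat.cast_ne_zero.2 Nat.card_pos.ne'
  simp only [mackeyFn, Set.mem_univ, if_true, SetLike.mem_coe, ← Finset.mul_sum, hsum]
  field_simp

theorem IsCharOn.indFn_self (hθ : IsCharOn H θ) : indFn H H θ = θ := by
  funext g
  by_cases hg : g ∈ H
  · have : ∀ y : G, (if y ∈ H then θ (y⁻¹ * g * y) else 0) = if y ∈ H then θ g else 0 :=
      fun y => by split_ifs with hy; exacts [hθ.apply_conj hy g, rfl]
    simp only [indFn, if_pos hg, this, sum_ite_mem_subgroup, ← mul_assoc]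
    rw [inv_mul_cancel₀ (Nat.cast_ne_zero.2 Nat.card_pos.ne'), one_mul]
  · simp [indFn, hg, hθ.apply_of_notMem hg]

theorem Tfn_indFn (hUH : U ≤ H) (hθ : IsCharOn U θ) :
    Tfn H (indFn U H θ) = resFn H (indFn U ⊤ θ) := by
  rw [Tfn, indFn_eq_resFn_mackeyFn U H θ, resFn_mackeyFn_of_le hUH fun _ => hθ.apply_of_notMem,
    indFn_top_eq_mackeyFn, mackeyFn_univ_mackeyFn, indFn_top_eq_mackeyFn]

end Induction

section MackeyModel

variable [Group G] {W : Type} [AddCommGroup W] [Module ℂ W]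
  (U H : Subgroup G) (ρ : Representation ℂ U W) (S : Set G)

noncomputable def equivariantOn : Submodule ℂ (G → W) where
  carrier := {φ | (∀ x (u : U), φ (x * u) = ρ u⁻¹ (φ x)) ∧ ∀ x ∉ S, φ x = 0}
  add_mem' ha hb :=
    ⟨fun x u => by simp [ha.1 x u, hb.1 x u], fun x hx => by simp [ha.2 x hx, hb.2 x hx]⟩
  zero_mem' := ⟨fun _ _ => by simp, fun _ _ => rfl⟩
  smul_mem' _ _ hφ := ⟨fun x u => by simp [hφ.1 x u], fun x hx => by simp [hφ.2 x hx]⟩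

variable {U ρ S} in
theorem funLeft_mem_equivariantOn (hSH : ∀ h ∈ H, ∀ x, h * x ∈ S ↔ x ∈ S) {h : G} (hh : h ∈ H)
    {φ : G → W} (hφ : φ ∈ equivariantOn U ρ S) :
    LinearMap.funLeft ℂ W (h⁻¹ * ·) φ ∈ equivariantOn U ρ S :=
  ⟨fun x u => by simpa [mul_assoc] using hφ.1 (h⁻¹ * x) u,
    fun x hx => hφ.2 _ fun hS => hx (by simpa using (hSH h hh _).2 hS)⟩

noncomputable def equivariantOnRep (hSH : ∀ h ∈ H, ∀ x, h * x ∈ S ↔ x ∈ S) :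
    Representation ℂ H (equivariantOn U ρ S) where
  toFun h := (LinearMap.funLeft ℂ W ((h : G)⁻¹ * ·)).restrict
    fun _ => funLeft_mem_equivariantOn H hSH h.2
  map_one' := by ext; simp
  map_mul' a b := by
    ext
    simp [mul_assoc]

variable [Fintype G]

noncomputable def averageOn : (G → W) →ₗ[ℂ] (G → W) where
  toFun φ x := if x ∈ S then (Nat.card U : ℂ)⁻¹ • ∑ u : U, ρ u (φ (x * u)) else 0
  map_add' φ ψ := by
    funext x
    split_ifs <;> simp [*, Finset.sum_add_distrib]
  map_smul' c φ := by
    funext x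
    split_ifs <;> simp [*, Finset.smul_sum, smul_comm c]

variable {U H ρ S}

theorem averageOn_mem (hSU : ∀ u ∈ U, ∀ x, x * u ∈ S ↔ x ∈ S) (φ : G → W) :
    averageOn U ρ S φ ∈ equivariantOn U ρ S := by
  refine ⟨fun x u₀ => ?_, fun x hx => if_neg hx⟩
  simp only [averageOn, LinearMap.coe_mk, AddHom.coe_mk, hSU _ u₀.2]
  split_ifs
  · rw [map_smul, map_sum]
    congr 1
    refine Fintype.sum_equiv (Equiv.mulLeft u₀) _ _ fun u => ?_
    simp [mul_assoc, ← Module.End.mul_apply, ← map_mul]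
  · simp

theorem averageOn_of_mem {φ : G → W} (hφ : φ ∈ equivariantOn U ρ S) : averageOn U ρ S φ = φ := by
  funext x
  simp only [averageOn, LinearMap.coe_mk, AddHom.coe_mk]
  split_ifs with hx
  · have : ∀ u : U, ρ u (φ (x * u)) = φ x := fun u => by
      rw [hφ.1 x u, ← Module.End.mul_apply, ← map_mul, mul_inv_cancel, map_one,
        Module.End.one_apply]
    simp only [this, Finset.sum_const, Finset.card_univ, ← Nat.card_eq_fintype_card,
      ← Nat.cast_smul_eq_nsmul ℂ, smul_smul]
    rw [inv_mul_cancel₀ (Nat.cast_ne_zero.2 Nat.card_pos.ne'), one_smul]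
  · exact (hφ.2 x hx).symm

theorem charFn_eq_sum (ρ : Representation ℂ U W) (g : G) :
    charFn U ρ g = ∑ u : U, if (u : G) = g then ρ.character u else 0 := by
  unfold charFn
  split_ifs with hg
  · rw [Fintype.sum_eq_single ⟨g, hg⟩ fun u hu => if_neg fun h => hu (Subtype.ext h), if_pos rfl]
  · exact (Finset.sum_eq_zero fun (u : U) _ => if_neg fun h : (u : G) = g => hg (h ▸ u.2)).symm

theorem trace_equivariantOnRep [FiniteDimensional ℂ W] (hSH : ∀ h ∈ H, ∀ x, h * x ∈ S ↔ x ∈ S)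
    (hSU : ∀ u ∈ U, ∀ x, x * u ∈ S ↔ x ∈ S) (a : H) :
    LinearMap.trace ℂ _ (equivariantOnRep U H ρ S hSH a) =
      (Nat.card U : ℂ)⁻¹ * ∑ x : G, if x ∈ S then charFn U ρ (x⁻¹ * a * x) else 0 := by
  change LinearMap.trace ℂ _ ((LinearMap.funLeft ℂ W ((a : G)⁻¹ * ·)).restrict
    fun _ => funLeft_mem_equivariantOn H hSH a.2) = _
  rw [LinearMap.trace_restrict_eq_trace_comp _ (averageOn_mem hSU) fun φ hφ => averageOn_of_mem hφ,
    LinearMap.trace_pi_eq_sum, Finset.mul_sum]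
  refine Finset.sum_congr rfl fun x _ => ?_
  -- In the diagonal block at `x`, only `u = x⁻¹ a x` sends `a⁻¹ x u` back to `x`.
  have hblock : LinearMap.proj x ∘ₗ (LinearMap.funLeft ℂ W ((a : G)⁻¹ * ·) ∘ₗ averageOn U ρ S) ∘ₗ
      LinearMap.single ℂ (fun _ => W) x = if x ∈ S then (Nat.card U : ℂ)⁻¹ •
        ∑ u : U, if (u : G) = x⁻¹ * a * x then ρ u else 0 else 0 := by
    have hfix : ∀ u : G, (a : G)⁻¹ * x * u = x ↔ u = x⁻¹ * a * x := fun u => by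
      rw [mul_assoc, inv_mul_eq_iff_eq_mul, ← eq_inv_mul_iff_mul_eq, mul_assoc]
    have hax : (a : G)⁻¹ * x ∈ S ↔ x ∈ S := hSH _ (H.inv_mem a.2) x
    ext w
    split_ifs with hx
    · simp [averageOn, Pi.single_apply, hx, hax, hfix, apply_ite, ite_apply]
    · simp [averageOn, hx, hax]
  rw [hblock]
  split_ifs <;> simp [map_sum, apply_ite, charFn_eq_sum, Representation.character]

end MackeyModel

section Mackey

variable [Group G] [Fintype G] {U H : Subgroup G} {θ : G → ℂ}

theorem IsCharOn.res_mackeyFn (hθ : IsCharOn U θ) {S : Set G}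
    (hSH : ∀ h ∈ H, ∀ x, h * x ∈ S ↔ x ∈ S) (hSU : ∀ u ∈ U, ∀ x, x * u ∈ S ↔ x ∈ S) :
    IsCharOn H (resFn H (mackeyFn U S θ)) := by
  obtain ⟨V, rfl⟩ := isCharOn_iff.1 hθ
  refine ⟨FDRep.of (equivariantOnRep U H V.ρ S hSH), funext fun g => ?_⟩
  by_cases hg : g ∈ H
  · simp only [resFn, mackeyFn, if_pos hg, dif_pos hg]
    exact (trace_equivariantOnRep hSH hSU ⟨g, hg⟩).symm
  · simp [resFn, hg]

theorem IsCharOn.ind (hθ : IsCharOn U θ) (hUH : U ≤ H) : IsCharOn H (indFn U H θ) :=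
  hθ.res_mackeyFn (fun _ hh _ => H.mul_mem_cancel_left hh)
    fun _ hu _ => H.mul_mem_cancel_right (hUH hu)

theorem IsCharOn.Tfn (hθ : IsCharOn H θ) : IsCharOn H (Tfn H θ) := by
  show IsCharOn H (resFn H (indFn H ⊤ θ))
  rw [indFn_top_eq_mackeyFn]
  exact hθ.res_mackeyFn (by simp) (by simp)

open DoubleCoset in
theorem sum_fiber_doubleCoset (H U : Subgroup G) (v x : G) :
    ∑ h : G, (if h ∈ H ∧ v⁻¹ * h⁻¹ * x ∈ U then (1 : ℂ) else 0) =
      if x ∈ doubleCoset v H U then (Nat.card ↥(H ⊓ U.map (MulAut.conj v).toMonoidHom) : ℂ)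
      else 0 := by
  split_ifs with hx
  · obtain ⟨h₀, hh₀, u₀, hu₀, rfl⟩ := mem_doubleCoset.1 hx
    rw [← mul_one (Nat.card _ : ℂ), ← sum_ite_mem_subgroup]
    refine Fintype.sum_equiv ((Equiv.inv G).trans (Equiv.mulRight h₀)) _ _
      fun h => if_congr ?_ rfl rfl
    simp only [Equiv.trans_apply, Equiv.inv_apply, Equiv.coe_mulRight, Subgroup.mem_inf,
      Subgroup.mem_map_conj]
    have : v⁻¹ * h⁻¹ * (h₀ * v * u₀) = v⁻¹ * (h⁻¹ * h₀) * v * u₀ := by group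
    rw [this, U.mul_mem_cancel_right hu₀, H.mul_mem_cancel_right hh₀, H.inv_mem_iff]
  · refine Finset.sum_eq_zero fun h _ => if_neg fun ⟨hh, hu⟩ => hx ?_
    exact mem_doubleCoset.2 ⟨h, hh, _, hu, by group⟩

open DoubleCoset in
theorem card_mul_sum_eq_card_mul_sum_doubleCoset (H U : Subgroup G) (v : G) {F : G → ℂ}
    (hF : ∀ x, ∀ u ∈ U, F (x * u) = F x) :
    Nat.card U * ∑ h : G, (if h ∈ H then F (h * v) else 0) =
      Nat.card ↥(H ⊓ U.map (MulAut.conj v).toMonoidHom) *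
        ∑ x : G, if x ∈ doubleCoset v H U then F x else 0 := by
  have hpairs : Nat.card U * ∑ h : G, (if h ∈ H then F (h * v) else 0) =
      ∑ h : G, ∑ u : G, (if h ∈ H ∧ u ∈ U then F (h * v * u) else 0) := by
    rw [Finset.mul_sum]
    refine Finset.sum_congr rfl fun h _ => ?_
    by_cases hh : h ∈ H
    · rw [if_pos hh, ← sum_ite_mem_subgroup]
      exact Finset.sum_congr rfl fun u _ => by by_cases hu : u ∈ U <;> simp [hh, hu, hF]
    · simp [hh]
  have hshift : ∀ h : G, ∑ u : G, (if h ∈ H ∧ u ∈ U then F (h * v * u) else 0) =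
      ∑ x : G, F x * if h ∈ H ∧ v⁻¹ * h⁻¹ * x ∈ U then 1 else 0 := fun h =>
    Fintype.sum_equiv (Equiv.mulLeft (h * v)) _ _ fun u => by simp [mul_assoc]
  rw [hpairs, Finset.mul_sum]
  simp only [hshift]
  rw [Finset.sum_comm]
  refine Finset.sum_congr rfl fun x _ => ?_
  rw [← Finset.mul_sum, sum_fiber_doubleCoset]
  split_ifs <;> ring

open DoubleCoset in
theorem resFn_mackeyFn_doubleCoset (hθ : IsCharOn U θ) (v : G) :
    resFn H (mackeyFn U (doubleCoset v H U) θ) =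
      indFn (H ⊓ U.map (MulAut.conj v).toMonoidHom) H
        (resFn (H ⊓ U.map (MulAut.conj v).toMonoidHom) (conjFn v θ)) := by
  funext g
  by_cases hg : g ∈ H
  swap
  · simp [resFn, indFn, hg]
  have hterm : ∀ y, (if y ∈ H then resFn (H ⊓ U.map (MulAut.conj v).toMonoidHom)
      (conjFn v θ) (y⁻¹ * g * y) else 0) =
        if y ∈ H then θ ((y * v)⁻¹ * g * (y * v)) else 0 := fun y => by
    split_ifs with hy
    · rw [resFn_inf_map_conj_conjFn hθ v (H.mul_mem (H.mul_mem (H.inv_mem hy) hg) hy), conjFn]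
      group
    · rfl
  have key := card_mul_sum_eq_card_mul_sum_doubleCoset H U v (F := fun x => θ (x⁻¹ * g * x))
    fun x u hu => by simpa [mul_assoc] using hθ.apply_conj hu (x⁻¹ * g * x)
  simp only [indFn, if_pos hg, hterm]
  simp only [resFn, mackeyFn, if_pos hg]
  have hU : (Nat.card U : ℂ) ≠ 0 := Nat.cast_ne_zero.2 Nat.card_pos.ne'
  have hK : (Nat.card ↥(H ⊓ U.map (MulAut.conj v).toMonoidHom) : ℂ) ≠ 0 :=
    Nat.cast_ne_zero.2 Nat.card_pos.ne'
  field_simp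
  linear_combination -key

open DoubleCoset in
theorem isConstituentOn_resFn_indFn_top (hθ : IsCharOn U θ) (v : G) :
    IsConstituentOn H
      (indFn (H ⊓ U.map (MulAut.conj v).toMonoidHom) H
        (resFn (H ⊓ U.map (MulAut.conj v).toMonoidHom) (conjFn v θ)))
      (resFn H (indFn U ⊤ θ)) := by
  refine ⟨resFn H (mackeyFn U (doubleCoset v H U)ᶜ θ),
    hθ.res_mackeyFn (fun _ hh _ => not_congr (mul_left_mem_doubleCoset_iff hh))
      fun _ hu _ => not_congr (mul_right_mem_doubleCoset_iff hu), ?_⟩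
  rw [← resFn_mackeyFn_doubleCoset hθ, ← resFn_add, mackeyFn_add_mackeyFn_compl,
    indFn_top_eq_mackeyFn]

end Mackey

section Decomposition

variable [Group G] [Fintype G] {K : Subgroup G} {β χ : G → ℂ}

/-- Since `conj (χ k) = χ k⁻¹`, `innerOn K β χ` is the dimension of the space of equivariant maps
from the representation of `χ` to that of `β`. -/
theorem IsIrrCharOn.isConstituentOn (hβ : IsIrrCharOn K β) (hχ : IsCharOn K χ)
    (h : innerOn K β χ ≠ 0) : IsConstituentOn K β χ := by
  obtain ⟨B, hB, rfl⟩ := hβ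
  obtain ⟨A, rfl⟩ := isCharOn_iff.1 hχ
  change innerOn K (charFn K B.ρ) (charFn K A.ρ) ≠ 0 at h
  have : Invertible (Nat.card K : ℂ) := invertibleOfNonzero (Nat.cast_ne_zero.2 Nat.card_pos.ne')
  have hinner : innerOn K (charFn K B.ρ) (charFn K A.ρ) =
      (Nat.card K : ℂ)⁻¹ * ∑ k : K, B.character k * A.character k⁻¹ := by
    rw [innerOn, ← Finset.sum_filter, Finset.sum_subtype (p := (· ∈ K)) _ fun _ => by simp]
    congr 1
    refine Finset.sum_congr rfl fun k _ => ?_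
    simp only [charFn, dif_pos k.2]
    exact congrArg _ (Representation.character_inv A.ρ k).symm
  obtain ⟨D, hD⟩ := FDRep.exists_character_eq_add_of_simple A B fun h0 => h (by
    rw [hinner, FDRep.scalar_product_char_eq_finrank_equivariant, h0, Nat.cast_zero])
  refine ⟨charFn K D.ρ, isCharOn_charFn K D.ρ, funext fun g => ?_⟩
  by_cases hg : g ∈ K
  · simp only [charFn, Pi.add_apply, dif_pos hg]
    exact hD ⟨g, hg⟩
  · simp [charFn, hg]

end Decomposition

section Tower

variable [Group G]

def conjInter {ι : Type*} (H : Subgroup G) (c : ι → G) : Subgroup G :=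
  ⨅ i, H.map (MulAut.conj (c i)).toMonoidHom

theorem conjInter_le {ι : Type*} (H : Subgroup G) {c : ι → G} {i : ι} (hc : c i = 1) :
    conjInter H c ≤ H := by
  intro g hg
  simpa [hc] using Subgroup.mem_map_conj.1 (Subgroup.mem_iInf.1 hg i)

theorem conjInter_fin_succ (H : Subgroup G) {j : ℕ} (c : Fin (j + 2) → G) (hc : c 0 = 1) :
    conjInter H c =
      H ⊓ (conjInter H fun i : Fin (j + 1) => (c 1)⁻¹ * c i.succ).map
        (MulAut.conj (c 1)).toMonoidHom := by
  ext g
  simp only [conjInter, Subgroup.mem_inf, Subgroup.mem_map_conj, Subgroup.mem_iInf]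
  have hconj : ∀ i : Fin (j + 1),
      ((c 1)⁻¹ * c i.succ)⁻¹ * ((c 1)⁻¹ * g * c 1) * ((c 1)⁻¹ * c i.succ) =
        (c i.succ)⁻¹ * g * c i.succ := fun i => by group
  rw [Fin.forall_fin_succ, hc]
  simp only [hconj, inv_one, one_mul, mul_one]

variable [Fintype G] {H : Subgroup G} {α : G → ℂ}

theorem exists_isConstituentOn_iterate_Tfn (hα : IsCharOn H α) (j : ℕ)
    (c : Fin (j + 1) → G) (hc : c 0 = 1) :
    ∃ z : G, IsCharOn (conjInter H c) (resFn (conjInter H c) (conjFn z α)) ∧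
      IsConstituentOn H (indFn (conjInter H c) H (resFn (conjInter H c) (conjFn z α)))
        ((Tfn H)^[j] α) := by
  induction j with
  | zero =>
    have hc' : conjInter H c = H := by
      ext g
      simp [conjInter, hc]
    refine ⟨1, ?_, ?_⟩ <;> rw [hc', conjFn_one, hα.resFn_eq]
    · exact hα
    · rw [hα.indFn_self]
      exact IsConstituentOn.refl H α
  | succ j ih =>
    obtain ⟨z, hzchar, hz⟩ := ih (fun i => (c 1)⁻¹ * c i.succ) (by simp)
    rw [conjInter_fin_succ H c hc]
    set U := conjInter H fun i : Fin (j + 1) => (c 1)⁻¹ * c i.succ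
    have hUH : U ≤ H := conjInter_le H (i := 0) (by simp)
    have hres := resFn_conjFn_resFn (K := H ⊓ U.map (MulAut.conj (c 1)).toMonoidHom)
      (fun k hk => Subgroup.mem_map_conj.1 (Subgroup.mem_inf.1 hk).2) (conjFn z α)
    rw [conjFn_conjFn] at hres
    refine ⟨c 1 * z, hres ▸ (hzchar.conj (c 1)).res inf_le_right, ?_⟩
    rw [← hres, Function.iterate_succ_apply']
    refine (isConstituentOn_resFn_indFn_top hzchar (c 1)).trans ?_
    rw [← Tfn_indFn hUH hzchar]
    exact hz.map (Tfn_add H) fun δ hδ => hδ.Tfn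

end Tower

/-- Let `H ≤ G` with core `N = core_G(H)` equal to an
intersection of `m` conjugates of `H` (with `x₁ = 1`).  Then for every
irreducible character `α` of `H` and every irreducible constituent `β` of
`α↓_N`, there is a suitable `z ∈ G` so that `Ind_N^H(β^z)` is a constituent
(summand) of `T^{m-1}(α)`, where `T(α) = (α↑G)↓_H`.  In particular (the
Mackey step), for any `x ∈ G`,
`Ind_{H∩xHx⁻¹}^H(Res_{H∩xHx⁻¹}(α^x))` is a constituent of `T(α)`. -/
theorem core_intersection_constituent [Group G] [Fintype G] (H : Subgroup G)
    (m : ℕ) (hm : 1 ≤ m) (x : Fin m → G) (hx0 : x ⟨0, hm⟩ = 1)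
    (hcore : (⨅ i, H.map (MulAut.conj (x i)).toMonoidHom) = H.normalCore) :
    (∀ α β : G → ℂ, IsIrrCharOn H α → IsIrrCharOn H.normalCore β →
      innerOn H.normalCore β (resFn H.normalCore α) ≠ 0 →
      ∃ z : G, ∃ δ : G → ℂ, IsCharOn H δ ∧
        (Tfn H)^[m - 1] α =
          fun g => indFn H.normalCore H (conjFn z β) g + δ g) ∧
    (∀ α : G → ℂ, IsIrrCharOn H α → ∀ y : G,
      ∃ δ : G → ℂ, IsCharOn H δ ∧
        Tfn H α = fun g =>
          indFn (H ⊓ H.map (MulAut.conj y).toMonoidHom) H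
            (resFn (H ⊓ H.map (MulAut.conj y).toMonoidHom) (conjFn y α)) g
          + δ g) := by
  refine ⟨fun α β hα hβ hinner => ?_, fun α hα y => isConstituentOn_resFn_indFn_top hα.isCharOn y⟩
  obtain ⟨j, rfl⟩ : ∃ j, m = j + 1 := ⟨m - 1, by omega⟩
  obtain ⟨z, -, hz⟩ := exists_isConstituentOn_iterate_Tfn hα.isCharOn j x hx0
  rw [show conjInter H x = H.normalCore from hcore] at hz
  have hβα := hβ.isConstituentOn (hα.isCharOn.res H.normalCore_le) hinner
  have hβαz : IsConstituentOn H.normalCore (conjFn z β) (resFn H.normalCore (conjFn z α)) := by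
    rw [← conjFn_resFn_of_normal]
    exact hβα.map (fun _ _ => rfl) fun δ hδ => hδ.conj_of_normal z
  refine ⟨z, (hβαz.map (indFn_add _ _) fun δ hδ => hδ.ind H.normalCore_le).trans ?_⟩
  simpa using hz
end

section
/- Let λ and μ be partitions of n with n ≥ 2, and let d(λ,μ) = |[λ] \ [μ]| + |[μ] \ [λ]| = 2(n − |[λ]∩[μ]|), where [λ] denotes the Young diagram of λ. Then d(λ,μ) is the length of a shortest path from λ to μ in the bipartite branching graph of partitions of n and n+1 (with an edge between α ⊢ n+1 and λ ⊢ n iff [λ] ⊆ [α]). -/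
/-! Let `k = |[λ] \ [μ]| = |[μ] \ [λ]|`. A step `λ ⊆ α ⊇ λ'` with `|α| = |λ| + 1` gives
`|[λ] \ [λ']| ≤ |[α] \ [λ']| = 1`, so by the triangle inequality `A \ C ⊆ (A \ B) ∪ (B \ C)`
every path from `λ` to `μ` has length at least `2k`. Conversely, adding to `[λ]` a minimal cell
of `[μ] \ [λ]` and then removing a maximal cell of `[λ] \ [μ]` keeps a Young diagram at each
stage and shrinks `[λ] \ [μ]` by one cell, so `k` such steps reach `μ`. -/

open Finset

theorem IsLowerSet.insert_of_forall_lt_mem {α : Type*} [PartialOrder α] {s : Set α} {a : α}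
    (hs : IsLowerSet s) (h : ∀ b < a, b ∈ s) : IsLowerSet (insert a s) := by
  rintro b c hcb (rfl | hb)
  · rcases hcb.eq_or_lt with rfl | hlt
    exacts [Or.inl rfl, Or.inr (h c hlt)]
  · exact Or.inr (hs hcb hb)

theorem Finset.card_sdiff_le_one_of_subset {α : Type*} [DecidableEq α] {s t u : Finset α}
    (hs : s ⊆ u) (ht : t ⊆ u) (hcard : #u = #t + 1) : #(s \ t) ≤ 1 := by
  calc #(s \ t) ≤ #(u \ t) := card_le_card (sdiff_subset_sdiff hs subset_rfl)
    _ = 1 := by rw [card_sdiff_of_subset ht]; omega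

theorem Finset.exists_mem_sdiff_forall_lt_mem {α : Type*} [PartialOrder α] [DecidableEq α]
    {s t : Finset α} (ht : IsLowerSet (t : Set α)) (h : (t \ s).Nonempty) :
    ∃ c ∈ t \ s, ∀ x < c, x ∈ s := by
  obtain ⟨c, hc⟩ := exists_minimal h
  refine ⟨c, hc.prop, fun x hxc => ?_⟩
  by_contra hx
  exact hc.not_lt (mem_sdiff.2 ⟨ht hxc.le (mem_sdiff.1 hc.prop).1, hx⟩) hxc

theorem Finset.exists_mem_sdiff_forall_le_eq {α : Type*} [PartialOrder α] [DecidableEq α]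
    {s t : Finset α} (ht : IsLowerSet (t : Set α)) (h : (s \ t).Nonempty) :
    ∃ c ∈ s \ t, ∀ x ∈ s ∪ t, c ≤ x → x = c := by
  obtain ⟨c, hc⟩ := exists_maximal h
  have hct := (mem_sdiff.1 hc.prop).2
  refine ⟨c, hc.prop, fun x hx hcx => ?_⟩
  have hxt : x ∉ t := fun hxt => hct (ht hcx hxt)
  have hxs : x ∈ s := (mem_union.1 hx).resolve_right hxt
  exact (hc.eq_of_le (mem_sdiff.2 ⟨hxs, hxt⟩) hcx).symm

namespace YoungDiagram

def insertCell (μ : YoungDiagram) (c : ℕ × ℕ) (hc : ∀ x < c, x ∈ μ.cells) : YoungDiagram where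
  cells := insert c μ.cells
  isLowerSet := by
    rw [coe_insert]
    exact μ.isLowerSet.insert_of_forall_lt_mem hc

def eraseCell (μ : YoungDiagram) (c : ℕ × ℕ) (hc : ∀ x ∈ μ.cells, c ≤ x → x = c) :
    YoungDiagram where
  cells := μ.cells.erase c
  isLowerSet := by
    rw [coe_erase]
    exact μ.isLowerSet.erase hc

@[simp]
theorem cells_insertCell (μ : YoungDiagram) (c : ℕ × ℕ) (hc : ∀ x < c, x ∈ μ.cells) :
    (μ.insertCell c hc).cells = insert c μ.cells := rfl

@[simp]
theorem cells_eraseCell (μ : YoungDiagram) (c : ℕ × ℕ) (hc : ∀ x ∈ μ.cells, c ≤ x → x = c) :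
    (μ.eraseCell c hc).cells = μ.cells.erase c := rfl

theorem exists_branching_step_toward {lam mu : YoungDiagram} (hcard : lam.card = mu.card)
    (h : (lam.cells \ mu.cells).Nonempty) :
    ∃ alpha lam' : YoungDiagram, lam ≤ alpha ∧ lam' ≤ alpha ∧ alpha.card = lam.card + 1 ∧
      lam'.card = lam.card ∧ #(lam'.cells \ mu.cells) + 1 = #(lam.cells \ mu.cells) := by
  have h' : (mu.cells \ lam.cells).Nonempty := by
    rwa [← card_pos, card_sdiff_comm hcard.symm, card_pos]
  obtain ⟨a, ha, ha_addable⟩ := exists_mem_sdiff_forall_lt_mem mu.isLowerSet h'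
  obtain ⟨r, hr, hr_removable⟩ := exists_mem_sdiff_forall_le_eq mu.isLowerSet h
  obtain ⟨ha_mu, ha_lam⟩ := mem_sdiff.1 ha
  let alpha := lam.insertCell a ha_addable
  have hr_alpha : r ∈ alpha.cells := mem_insert_of_mem (mem_sdiff.1 hr).1
  have hr_removable' : ∀ x ∈ alpha.cells, r ≤ x → x = r := by
    intro x hx
    refine hr_removable x ?_
    rcases mem_insert.1 hx with rfl | hx
    exacts [mem_union_right _ ha_mu, mem_union_left _ hx]
  have halpha_card : #alpha.cells = #lam.cells + 1 := card_insert_of_notMem ha_lam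
  refine ⟨alpha, alpha.eraseCell r hr_removable', fun _ => mem_insert_of_mem,
    fun _ => mem_of_mem_erase, halpha_card, ?_, ?_⟩
  · rw [YoungDiagram.card, cells_eraseCell, card_erase_of_mem hr_alpha, halpha_card,
      Nat.add_sub_cancel]
  · rw [cells_eraseCell, cells_insertCell, erase_sdiff_comm, insert_sdiff_of_mem _ ha_mu,
      card_erase_add_one hr]

/-- The path `λ^0, α^1, λ^1, …, α^m, λ^m` with `λ^i = lams i` and `α^(i+1) = alphs i`. -/
def IsBranchingPath (n m : ℕ) (lams alphs : ℕ → YoungDiagram) : Prop :=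
  (∀ i ≤ m, (lams i).card = n) ∧ (∀ i < m, (alphs i).card = n + 1) ∧
    ∀ i < m, lams i ≤ alphs i ∧ lams (i + 1) ≤ alphs i

namespace IsBranchingPath

variable {n m : ℕ} {lams alphs : ℕ → YoungDiagram}

theorem of_le (hp : IsBranchingPath n m lams alphs) {k : ℕ} (hk : k ≤ m) :
    IsBranchingPath n k lams alphs :=
  ⟨fun i hi => hp.1 i (hi.trans hk), fun i hi => hp.2.1 i (hi.trans_le hk),
    fun i hi => hp.2.2 i (hi.trans_le hk)⟩

theorem cons {lam alpha : YoungDiagram} (hlam : lam.card = n) (halpha : alpha.card = n + 1)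
    (hlam_le : lam ≤ alpha) (hnext_le : lams 0 ≤ alpha) (hp : IsBranchingPath n m lams alphs) :
    IsBranchingPath n (m + 1) (Stream'.cons lam lams) (Stream'.cons alpha alphs) := by
  refine ⟨?_, ?_, ?_⟩ <;> rintro (_ | i) hi
  exacts [hlam, hp.1 i (by omega), halpha, hp.2.1 i (by omega), ⟨hlam_le, hnext_le⟩,
    hp.2.2 i (by omega)]

theorem card_sdiff_le (hp : IsBranchingPath n m lams alphs) :
    #((lams 0).cells \ (lams m).cells) ≤ m := by
  induction m with
  | zero => simp
  | succ m ih =>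
    have hstep : #((lams m).cells \ (lams (m + 1)).cells) ≤ 1 :=
      card_sdiff_le_one_of_subset (cells_subset_iff.2 (hp.2.2 m m.lt_succ_self).1)
        (cells_subset_iff.2 (hp.2.2 m m.lt_succ_self).2)
        ((hp.2.1 m m.lt_succ_self).trans (congrArg (· + 1) (hp.1 (m + 1) le_rfl).symm))
    calc #((lams 0).cells \ (lams (m + 1)).cells)
        ≤ #((lams 0).cells \ (lams m).cells) + #((lams m).cells \ (lams (m + 1)).cells) :=
          (card_le_card (sdiff_triangle _ _ _)).trans (card_union_le _ _)
      _ ≤ m + 1 := add_le_add (ih (hp.of_le m.le_succ)) hstep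

end IsBranchingPath

theorem exists_isBranchingPath {n : ℕ} {lam mu : YoungDiagram} (hlam : lam.card = n)
    (hmu : mu.card = n) :
    ∃ lams alphs : ℕ → YoungDiagram, lams 0 = lam ∧ lams #(lam.cells \ mu.cells) = mu ∧
      IsBranchingPath n #(lam.cells \ mu.cells) lams alphs := by
  obtain ⟨k, hk⟩ : ∃ k, #(lam.cells \ mu.cells) = k := ⟨_, rfl⟩
  rw [hk]
  induction k generalizing lam with
  | zero =>
    have hsub : lam.cells ⊆ mu.cells := sdiff_eq_empty_iff_subset.1 (card_eq_zero.1 hk)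
    have heq : lam = mu :=
      YoungDiagram.ext (eq_of_subset_of_card_le hsub (hmu.trans hlam.symm).le)
    exact ⟨fun _ => lam, fun _ => lam, rfl, heq, fun _ _ => hlam,
      fun i hi => absurd hi i.not_lt_zero, fun i hi => absurd hi i.not_lt_zero⟩
  | succ k ih =>
    obtain ⟨alpha, lam', hlam_le, hlam'_le, halpha, hlam', hk'⟩ :=
      exists_branching_step_toward (hlam.trans hmu.symm) (card_pos.1 (by omega))
    obtain ⟨lams, alphs, h0, hlast, hp⟩ := ih (hlam'.trans hlam) (by omega)
    exact ⟨Stream'.cons lam lams, Stream'.cons alpha alphs, rfl, hlast,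
      hp.cons hlam (hlam ▸ halpha) hlam_le (h0 ▸ hlam'_le)⟩

end YoungDiagram

theorem branching_graph_dist_general (n : ℕ) (lam mu : YoungDiagram)
    (hl : lam.card = n) (hm : mu.card = n) :
    IsLeast
      {L : ℕ | ∃ (m : ℕ) (lams alphs : ℕ → YoungDiagram),
        L = 2 * m ∧ lams 0 = lam ∧ lams m = mu ∧
        (∀ i ≤ m, (lams i).card = n) ∧
        (∀ i < m, (alphs i).card = n + 1) ∧
        (∀ i < m, lams i ≤ alphs i ∧ lams (i + 1) ≤ alphs i)}
      ((lam.cells \ mu.cells).card + (mu.cells \ lam.cells).card) := by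
  rw [card_sdiff_comm (hm.trans hl.symm)]
  constructor
  · obtain ⟨lams, alphs, h0, hlast, hp⟩ := YoungDiagram.exists_isBranchingPath hl hm
    exact ⟨_, lams, alphs, (two_mul _).symm, h0, hlast, hp⟩
  · rintro _ ⟨m, lams, alphs, rfl, rfl, rfl, hp⟩
    have := YoungDiagram.IsBranchingPath.card_sdiff_le hp
    omega

/-- For partitions `λ, μ` of `n ≥ 2` (identified with Young
diagrams with `n` cells), the quantity
`d(λ,μ) = |[λ]\[μ]| + |[μ]\[λ]| = 2(n − |[λ]∩[μ]|)` is the length of a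
shortest path from `λ` to `μ` in the bipartite branching graph on partitions
of `n` and `n+1` (an edge joining `α ⊢ n+1` and `ν ⊢ n` iff `[ν] ⊆ [α]`). -/
theorem branching_graph_dist (n : ℕ) (hn : 2 ≤ n) (lam mu : YoungDiagram)
    (hl : lam.card = n) (hm : mu.card = n) :
    IsLeast
      {L : ℕ | ∃ (m : ℕ) (lams alphs : ℕ → YoungDiagram),
        L = 2 * m ∧ lams 0 = lam ∧ lams m = mu ∧
        (∀ i ≤ m, (lams i).card = n) ∧
        (∀ i < m, (alphs i).card = n + 1) ∧
        (∀ i < m, lams i ≤ alphs i ∧ lams (i + 1) ≤ alphs i)}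
      ((lam.cells \ mu.cells).card + (mu.cells \ lam.cells).card) :=
  branching_graph_dist_general n lam mu hl hm
end

section
/- Let n ≥ 4 and let a = (1,2,...,n) be an n-cycle in the symmetric group S_n. Set g = (2,n−2)(n−1,n) and ã = g·a·g^{-1}. Then the cyclic subgroups ⟨a⟩ and ⟨ã⟩ intersect trivially: ⟨a⟩ ∩ ⟨ã⟩ = {1}. In particular, the cyclic subgroup ⟨a⟩ ≤ S_n has a conjugate meeting it trivially. -/
/-! If `g a^m g⁻¹ = a^k`, then `g (y + m) = g y + k` for all `y : Fin n`, so the solution set of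
any equation `g (y + d) = g y + c` is invariant under translation by `m`. For
`g = (1, n-3)(n-2, n-1)` one such equation has a single solution (for `n ≥ 7`,
`g (y + 1) = g y - 1` holds only at `y = n - 2`; `n ≤ 6` is a finite check), so `m = 0` in
`Fin n`, whence `a^m = 1` and the common element is trivial. -/

open Equiv

theorem eq_zero_of_map_add_eq_add {G : Type*} [AddCancelCommMonoid G] {f : G → G} {m k d c y₀ : G}
    (hf : ∀ y, f (y + m) = f y + k) (hu : ∀ y, f (y + d) = f y + c ↔ y = y₀) : m = 0 := by
  have : f (y₀ + m + d) = f (y₀ + m) + c := by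
    rw [add_right_comm, hf, hf, (hu y₀).2 rfl, add_right_comm]
  simpa using (hu _).1 this

open Fin.NatCast

theorem finRotate_pow_apply {n : ℕ} [NeZero n] (j : ℕ) (x : Fin n) :
    (finRotate n ^ j) x = x + j := by
  induction j with
  | zero => simp
  | succ j ih => rw [pow_succ', Perm.mul_apply, ih, finRotate_apply, Nat.cast_succ, add_assoc]

theorem finRotate_pow_eq_one_iff {n : ℕ} [NeZero n] (j : ℕ) :
    finRotate n ^ j = 1 ↔ (j : Fin n) = 0 := by
  refine ⟨fun h => by simpa [finRotate_pow_apply] using congr($h 0), fun h => ?_⟩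
  ext x
  simp [finRotate_pow_apply, h]

def twoSwaps (n : ℕ) (hn : 4 ≤ n) : Perm (Fin n) :=
  swap ⟨1, (by decide : 1 < 4).trans_le hn⟩ ⟨n - 3, Nat.sub_lt (by omega) (by decide)⟩ *
    swap ⟨n - 2, Nat.sub_lt (by omega) (by decide)⟩ ⟨n - 1, Nat.sub_lt (by omega) (by decide)⟩

theorem val_twoSwaps_apply (n : ℕ) (hn : 4 ≤ n) (z : Fin n) :
    (twoSwaps n hn z : ℕ) =
      if z.val = 1 then n - 3 else if z.val = n - 3 then 1
      else if z.val = n - 2 then n - 1 else if z.val = n - 1 then n - 2 else z.val := by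
  simp only [twoSwaps, Perm.mul_apply, swap_apply_def, Fin.ext_iff]
  split_ifs <;> simp only at * <;> omega

theorem exists_twoSwaps_add_eq_add_iff (n : ℕ) (hn : 4 ≤ n) :
    ∃ d c y₀ : Fin n, ∀ y, twoSwaps n hn (y + d) = twoSwaps n hn y + c ↔ y = y₀ := by
  rcases le_or_gt n 6 with hsmall | hbig
  · interval_cases n <;> revert hn <;> decide
  refine ⟨⟨1, by omega⟩, ⟨n - 1, by omega⟩, ⟨n - 2, by omega⟩, fun y => ?_⟩
  simp only [Fin.ext_iff, Fin.val_add_eq_ite, val_twoSwaps_apply]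
  split_ifs <;> omega

/-- Let `n ≥ 4`, let `a = (1,2,…,n)` be the standard `n`-cycle
in `S_n` (here `finRotate n` on `Fin n`), and let `g = (2,n−2)(n−1,n)` (in
zero-based labels the product of the swaps `(1, n−3)` and `(n−2, n−1)`).
Then the cyclic subgroups generated by `a` and by its conjugate
`ã = g a g⁻¹` intersect trivially. -/
theorem cyclic_conjugate_trivial_intersection (n : ℕ) (hn : 4 ≤ n) :
    Subgroup.zpowers (finRotate n) ⊓
      Subgroup.zpowers
        ((Equiv.swap (⟨1, by omega⟩ : Fin n) ⟨n - 3, by omega⟩ *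
            Equiv.swap (⟨n - 2, by omega⟩ : Fin n) ⟨n - 1, by omega⟩) *
          finRotate n *
          (Equiv.swap (⟨1, by omega⟩ : Fin n) ⟨n - 3, by omega⟩ *
            Equiv.swap (⟨n - 2, by omega⟩ : Fin n) ⟨n - 1, by omega⟩)⁻¹) = ⊥ := by
  have : NeZero n := ⟨by omega⟩
  change Subgroup.zpowers (finRotate n) ⊓
    Subgroup.zpowers (twoSwaps n hn * finRotate n * (twoSwaps n hn)⁻¹) = ⊥
  rw [eq_bot_iff]
  rintro x ⟨hxa, hxb⟩
  obtain ⟨k, rfl⟩ : ∃ k : ℕ, finRotate n ^ k = x := mem_powers_iff_mem_zpowers.2 hxa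
  obtain ⟨m, hm⟩ : ∃ m : ℕ, twoSwaps n hn * finRotate n ^ m * (twoSwaps n hn)⁻¹ = finRotate n ^ k := by
    simpa only [Submonoid.mem_powers_iff, conj_pow] using mem_powers_iff_mem_zpowers.2 hxb
  have hshift : ∀ y, twoSwaps n hn (y + m) = twoSwaps n hn y + k := fun y => by
    simpa [finRotate_pow_apply] using congr($hm (twoSwaps n hn y))
  obtain ⟨d, c, y₀, hu⟩ := exists_twoSwaps_add_eq_add_iff n hn
  have hm1 := (finRotate_pow_eq_one_iff m).2 (eq_zero_of_map_add_eq_add hshift hu)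
  rw [Subgroup.mem_bot, ← hm, hm1, mul_one, mul_inv_cancel]
end

section
/- Let n > 5 and let H = D_{2n} be the dihedral subgroup of S_n of order 2n generated by a = (1,2,...,n) and b = (1,n)(2,n−1)···(⌊n/2⌋,⌈(n+2)/2⌉). Setting g = (2,n−2)(n−1,n), the subgroup H and its conjugate H^g = gHg^{-1} intersect trivially: H ∩ H^g = {1}. -/
/-!
Every element of `H` acts on `ℤ/n` as `x ↦ ±x + c`. If `h = g k g⁻¹` with `h`, `k` of this
form, then `g (k (x + 1)) - g (k x) = ± (g (x + 1) - g x)`, so `k` carries the difference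
sequence `Δ x = g (x + 1) - g x` of `g` to `±Δ` (through `x ↦ x + d` or `x ↦ d - 1 - x`).
Now `Δ = 1` away from `{0, 1, -4, -3, -2, -1}`, and the value `2` is attained only at `-1`;
this pins down `d`, and one more value of `Δ` shows that `k = 1`.
-/

open Equiv

namespace DihedralTwist

variable (R : Type*) [CommRing R]

def signedAffine : Subgroup (Perm R) where
  carrier := {σ | ∃ ε c : R, (ε = 1 ∨ ε = -1) ∧ ∀ x, σ x = ε * x + c}
  mul_mem' := by
    rintro σ τ ⟨ε, c, hε, hσ⟩ ⟨ε', c', hε', hτ⟩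
    refine ⟨ε * ε', ε * c' + c, ?_, fun x => by rw [Perm.mul_apply, hτ, hσ]; ring⟩
    rcases hε with rfl | rfl <;> rcases hε' with rfl | rfl <;> simp
  one_mem' := ⟨1, 0, Or.inl rfl, fun x => by simp⟩
  inv_mem' := by
    rintro σ ⟨ε, c, hε, hσ⟩
    have hεε : ε * ε = 1 := by rcases hε with rfl | rfl <;> ring
    refine ⟨ε, -(ε * c), hε, fun y => ?_⟩
    rw [Perm.inv_eq_iff_eq, hσ]
    linear_combination (c - y) * hεε

variable {R} {n : ℕ} [CharP R n]

-- The default for `hk` is discharged by `omega` from a hypothesis `5 < n` at the call site.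
theorem ne_of_sub_eq_natCast {a b : R} (k : ℕ) (h : a - b = k := by push_cast; ring)
    (hk : 0 < k ∧ k < n := by omega) : a ≠ b := by
  intro hab
  have hdvd : n ∣ k := (CharP.cast_eq_zero_iff R n k).1 (by rw [← h, hab, sub_self])
  have := Nat.le_of_dvd hk.1 hdvd
  omega

variable (R) [DecidableEq R]

/-- The permutation `g = (2, n-2)(n-1, n)`, written on residues mod `n` starting from `0`. -/
def twist : Perm R := swap 1 (-3) * swap (-2) (-1)

def twistDiff (y : R) : R := twist R (y + 1) - twist R y

variable {R}

theorem twist_apply_of_ne {x : R} (h1 : x ≠ 1) (h3 : x ≠ -3) (h2 : x ≠ -2) (h1' : x ≠ -1) :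
    twist R x = x := by
  rw [twist, Perm.mul_apply, swap_apply_of_ne_of_ne h2 h1', swap_apply_of_ne_of_ne h1 h3]

theorem twistDiff_of_ne {y : R} (h0 : y ≠ 0) (h1 : y ≠ 1) (h4 : y ≠ -4) (h3 : y ≠ -3)
    (h2 : y ≠ -2) (h1' : y ≠ -1) : twistDiff R y = 1 := by
  rw [twistDiff, twist_apply_of_ne h1 h3 h2 h1',
    twist_apply_of_ne (fun h => h0 (by linear_combination h))
      (fun h => h4 (by linear_combination h)) (fun h => h3 (by linear_combination h))
      (fun h => h2 (by linear_combination h))]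
  ring

section

variable (hn : 5 < n)
include hn

theorem twist_one : twist R 1 = -3 := by
  have h2 : (1 : R) ≠ -2 := ne_of_sub_eq_natCast 3
  have h1 : (1 : R) ≠ -1 := ne_of_sub_eq_natCast 2
  rw [twist, Perm.mul_apply, swap_apply_of_ne_of_ne h2 h1, swap_apply_left]

theorem twist_neg_three : twist R (-3) = 1 := by
  have h2 : (-3 : R) ≠ -2 := (ne_of_sub_eq_natCast 1).symm
  have h1 : (-3 : R) ≠ -1 := (ne_of_sub_eq_natCast 2).symm
  rw [twist, Perm.mul_apply, swap_apply_of_ne_of_ne h2 h1, swap_apply_right]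

theorem twist_neg_two : twist R (-2) = -1 := by
  have h1 : (-1 : R) ≠ 1 := (ne_of_sub_eq_natCast 2).symm
  have h3 : (-1 : R) ≠ -3 := ne_of_sub_eq_natCast 2
  rw [twist, Perm.mul_apply, swap_apply_left, swap_apply_of_ne_of_ne h1 h3]

theorem twist_neg_one : twist R (-1) = -2 := by
  have h1 : (-2 : R) ≠ 1 := (ne_of_sub_eq_natCast 3).symm
  have h3 : (-2 : R) ≠ -3 := ne_of_sub_eq_natCast 1
  rw [twist, Perm.mul_apply, swap_apply_right, swap_apply_of_ne_of_ne h1 h3]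

theorem twist_zero : twist R 0 = 0 :=
  twist_apply_of_ne (ne_of_sub_eq_natCast 1).symm (ne_of_sub_eq_natCast 3)
    (ne_of_sub_eq_natCast 2) (ne_of_sub_eq_natCast 1)

theorem twistDiff_zero : twistDiff R 0 = -3 := by
  rw [twistDiff, zero_add, twist_one hn, twist_zero hn, sub_zero]

theorem twistDiff_one : twistDiff R 1 = 5 := by
  rw [twistDiff, one_add_one_eq_two, twist_one hn, twist_apply_of_ne (ne_of_sub_eq_natCast 1)
    (ne_of_sub_eq_natCast 5) (ne_of_sub_eq_natCast 4) (ne_of_sub_eq_natCast 3)]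
  ring

theorem twistDiff_neg_four : twistDiff R (-4) = 5 := by
  rw [twistDiff, show (-4 : R) + 1 = -3 by ring, twist_neg_three hn,
    twist_apply_of_ne (ne_of_sub_eq_natCast 5).symm (ne_of_sub_eq_natCast 1).symm
      (ne_of_sub_eq_natCast 2).symm (ne_of_sub_eq_natCast 3).symm]
  ring

theorem twistDiff_neg_three : twistDiff R (-3) = -2 := by
  rw [twistDiff, show (-3 : R) + 1 = -2 by ring, twist_neg_two hn, twist_neg_three hn]
  ring

theorem twistDiff_neg_two : twistDiff R (-2) = -1 := by
  rw [twistDiff, show (-2 : R) + 1 = -1 by ring, twist_neg_one hn, twist_neg_two hn]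
  ring

theorem twistDiff_neg_one : twistDiff R (-1) = 2 := by
  rw [twistDiff, neg_add_cancel, twist_zero hn, twist_neg_one hn]
  ring

theorem twistDiff_eq_two_iff {y : R} : twistDiff R y = 2 ↔ y = -1 := by
  refine ⟨fun h => ?_, fun h => h ▸ twistDiff_neg_one hn⟩
  by_contra h1'
  by_cases h0 : y = 0
  · rw [h0, twistDiff_zero hn] at h; exact absurd h.symm (ne_of_sub_eq_natCast 5)
  by_cases h1 : y = 1
  · rw [h1, twistDiff_one hn] at h; exact absurd h (ne_of_sub_eq_natCast 3)
  by_cases h4 : y = -4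
  · rw [h4, twistDiff_neg_four hn] at h; exact absurd h (ne_of_sub_eq_natCast 3)
  by_cases h3 : y = -3
  · rw [h3, twistDiff_neg_three hn] at h; exact absurd h.symm (ne_of_sub_eq_natCast 4)
  by_cases h2 : y = -2
  · rw [h2, twistDiff_neg_two hn] at h; exact absurd h.symm (ne_of_sub_eq_natCast 3)
  rw [twistDiff_of_ne h0 h1 h4 h3 h2 h1'] at h
  exact absurd h.symm (ne_of_sub_eq_natCast 1)

theorem eq_zero_of_forall_twistDiff_add_eq {ε d : R} (hε : ε = 1 ∨ ε = -1)
    (h : ∀ x, twistDiff R (x + d) = ε * twistDiff R x) : d = 0 := by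
  rcases hε with rfl | rfl
  · have hd := (twistDiff_eq_two_iff hn (y := -1 + d)).1
      (by rw [h, twistDiff_neg_one hn, one_mul])
    linear_combination hd
  · have hd := (twistDiff_eq_two_iff hn (y := -3 + d)).1
      (by rw [h, twistDiff_neg_three hn]; ring)
    have h0 := h (-2)
    rw [show (-2 : R) + d = 0 by linear_combination hd, twistDiff_zero hn,
      twistDiff_neg_two hn] at h0
    exact absurd h0.symm (ne_of_sub_eq_natCast 4)

theorem not_forall_twistDiff_sub_eq {ε d : R} (hε : ε = 1 ∨ ε = -1) :
    ¬ ∀ x, twistDiff R (d - 1 - x) = -ε * twistDiff R x := by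
  intro h
  rcases hε with rfl | rfl
  · have hd := (twistDiff_eq_two_iff hn (y := d - 1 - -3)).1
      (by rw [h, twistDiff_neg_three hn]; ring)
    have h2 := h (-2)
    rw [show d - 1 - -2 = (-2 : R) by linear_combination hd, twistDiff_neg_two hn] at h2
    exact absurd h2.symm (ne_of_sub_eq_natCast 2)
  · have hd := (twistDiff_eq_two_iff hn (y := d - 1 - -1)).1
      (by rw [h, twistDiff_neg_one hn]; ring)
    have h0 := h 0
    rw [show d - 1 - 0 = (-2 : R) by linear_combination hd, twistDiff_neg_two hn,
      twistDiff_zero hn] at h0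
    exact absurd h0 (ne_of_sub_eq_natCast 2)

theorem eq_one_of_mul_twist_eq_twist_mul {h k : Perm R} (hh : h ∈ signedAffine R)
    (hk : k ∈ signedAffine R) (hhk : h * twist R = twist R * k) : k = 1 := by
  obtain ⟨ε, c, hε, hh⟩ := hh
  obtain ⟨δ, d, hδ, hk⟩ := hk
  have hdiff (x : R) : twist R (k (x + 1)) - twist R (k x) = ε * twistDiff R x := by
    have comm (y : R) : twist R (k y) = h (twist R y) := (DFunLike.congr_fun hhk y).symm
    rw [comm, comm, hh, hh, twistDiff]
    ring
  rcases hδ with rfl | rfl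
  · have hd : d = 0 := eq_zero_of_forall_twistDiff_add_eq hn hε fun x => by
      rw [← hdiff, hk, hk, twistDiff]
      congr 2 <;> ring
    ext x
    simp [hk, hd]
  · refine absurd (fun x => ?_) (not_forall_twistDiff_sub_eq hn hε (d := d))
    rw [neg_mul, ← hdiff, hk, hk, twistDiff, neg_sub]
    congr 2 <;> ring

theorem inf_map_conj_twist_eq_bot {H : Subgroup (Perm R)} (hH : H ≤ signedAffine R) :
    H ⊓ H.map (MulAut.conj (twist R)).toMonoidHom = ⊥ := by
  rw [eq_bot_iff]
  rintro _ ⟨hx, k, hk, rfl⟩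
  rw [eq_one_of_mul_twist_eq_twist_mul hn (hH hx) (hH hk) (by simp [mul_assoc])]
  simp

end

end DihedralTwist

open DihedralTwist

open Fin.CommRing in
theorem closure_finRotate_revPerm_le_signedAffine (n : ℕ) [NeZero n] :
    Subgroup.closure {finRotate n, (Fin.revPerm : Perm (Fin n))} ≤ signedAffine (Fin n) := by
  rw [Subgroup.closure_le]
  rintro σ (rfl | rfl)
  · exact ⟨1, 1, Or.inl rfl, fun x => by rw [finRotate_apply, one_mul]⟩
  · refine ⟨-1, -1, Or.inr rfl, fun x => ?_⟩
    obtain ⟨m, rfl⟩ : ∃ m, n = m + 1 := Nat.exists_eq_add_one.2 (Nat.pos_of_neZero n)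
    rw [Fin.revPerm_apply, ← Fin.last_sub, ← neg_neg (Fin.last m), Fin.neg_last]
    ring

open Fin.CommRing in
theorem Fin.eq_neg_natCast_of_val_eq {n k : ℕ} [NeZero n] {a : Fin n} (hk : k < n)
    (ha : (a : ℕ) = n - k) : a = -(k : Fin n) := by
  rw [eq_neg_iff_add_eq_zero]
  ext
  simp [Fin.val_add, ha, Nat.mod_eq_of_lt hk, Nat.sub_add_cancel hk.le]

open Fin.CommRing in
theorem swap_mul_swap_eq_twist {n : ℕ} [NeZero n] (hn : 3 < n) {a b c d : Fin n}
    (ha : (a : ℕ) = 1) (hb : (b : ℕ) = n - 3) (hc : (c : ℕ) = n - 2) (hd : (d : ℕ) = n - 1) :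
    swap a b * swap c d = twist (Fin n) := by
  rw [show a = 1 by ext; simp [ha, Nat.mod_eq_of_lt (show 1 < n by omega)], Fin.eq_neg_natCast_of_val_eq (by omega) hb, Fin.eq_neg_natCast_of_val_eq (by omega) hc,
    Fin.eq_neg_natCast_of_val_eq (by omega) hd]
  simp only [Nat.cast_ofNat, Nat.cast_one]
  rfl

/-- Let `n > 5` and let `H = D_{2n} ≤ S_n` be the dihedral
subgroup of order `2n` generated by the `n`-cycle `a = (1,2,…,n)`
(`finRotate n` on `Fin n`) and the reversal `b = (1,n)(2,n−1)⋯`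
(`Fin.revPerm`).  With `g = (2,n−2)(n−1,n)` (zero-based: the product of the
swaps `(1, n−3)` and `(n−2, n−1)`), the subgroup `H` and its conjugate
`H^g = gHg⁻¹` intersect trivially. -/
theorem dihedral_conjugate_trivial_intersection (n : ℕ) (hn : 5 < n) :
    (Subgroup.closure {finRotate n, (Fin.revPerm : Equiv.Perm (Fin n))}) ⊓
      (Subgroup.closure {finRotate n, (Fin.revPerm : Equiv.Perm (Fin n))}).map
        (MulAut.conj
          (Equiv.swap (⟨1, by omega⟩ : Fin n) ⟨n - 3, by omega⟩ *
            Equiv.swap (⟨n - 2, by omega⟩ : Fin n) ⟨n - 1, by omega⟩)).toMonoidHom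
      = ⊥ := by
  have : NeZero n := ⟨by omega⟩
  rw [swap_mul_swap_eq_twist (by omega) rfl rfl rfl rfl]
  open Fin.CommRing in
  exact inf_map_conj_twist_eq_bot hn (closure_finRotate_revPerm_le_signedAffine n)
end
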